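/- arXiv:2001.04496 — 9 statements merged into one kernel-verified Lean document; each statement's English description precedes it below -/
import Mathlib

section
/- Let f ∈ F²_d be NC outer and let 0 ≤ r < 1. Suppose T is a bounded operator on F²_d acting as left multiplication by the r-rescaled power series of f, i.e. for all words β, γ: ⟪e_γ, T e_β⟫ = r^{|α|}·f(α) whenever γ = α·β for a (necessarily unique) word α, and ⟪e_γ, T e_β⟫ = 0 whenever γ has no factorization γ = α·β. Then T is invertible in the ring of bounded operators on F²_d (IsUnit T). -/
noncomputable section

open scoped ComplexConjugate
open Matrix
open scoped ComplexOrder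

abbrev Word (d : ℕ) := FreeMonoid (Fin d)

instance {d : ℕ} : DecidableEq (Word d) :=
  fun a b => decidable_of_iff (FreeMonoid.toList a = FreeMonoid.toList b)
    FreeMonoid.toList.injective.eq_iff

abbrev Fock (d : ℕ) := lp (fun _ : Word d => ℂ) 2

abbrev fockBasis (d : ℕ) (α : Word d) : Fock d := lp.single 2 α (1 : ℂ)

/-- Product of the matrices `Z i` along the word `α`. -/
def wordProdM {d : ℕ} {n : Type} [Fintype n] [DecidableEq n]
    (Z : Fin d → Matrix n n ℂ) (α : Word d) : Matrix n n ℂ :=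
  (α.toList.map Z).prod

/-- Evaluation of a power series with coefficients `c` at the matrix tuple `Z`. -/
def evalM {d : ℕ} {n : Type} [Fintype n] [DecidableEq n]
    (c : Word d → ℂ) (Z : Fin d → Matrix n n ℂ) : Matrix n n ℂ :=
  ∑' α : Word d, c α • wordProdM Z α

def IsStrictRowContraction {d : ℕ} {n : Type} [Fintype n] [DecidableEq n]
    (Z : Fin d → Matrix n n ℂ) : Prop :=
  (1 - ∑ i, Z i * (Z i)ᴴ).PosDef

abbrev L2N := lp (fun _ : ℕ => ℂ) 2

def wordProdO {d : ℕ} (Z : Fin d → (L2N →L[ℂ] L2N)) (α : Word d) : L2N →L[ℂ] L2N :=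
  (α.toList.map Z).prod

def evalO {d : ℕ} (c : Word d → ℂ) (Z : Fin d → (L2N →L[ℂ] L2N)) : L2N →L[ℂ] L2N :=
  ∑' α : Word d, c α • wordProdO Z α

def IsStrictRowContractionO {d : ℕ} (Z : Fin d → (L2N →L[ℂ] L2N)) : Prop :=
  ∃ r : ℝ, r < 1 ∧
    ((r ^ 2 : ℂ) • (1 : L2N →L[ℂ] L2N)
      - ∑ i, Z i ∘L ContinuousLinearMap.adjoint (Z i)).IsPositive

/-- The singularity space `𝒮(f)`. -/
def SingSpace {d : ℕ} (f : Word d → ℂ) : Set (Fock d) :=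
  {h | (∀ (n : ℕ) (Z : Fin d → Matrix (Fin n) (Fin n) ℂ) (y : Fin n → ℂ),
          IsStrictRowContraction Z → (evalM f Z)ᴴ *ᵥ y = 0 → (evalM (h ·) Z)ᴴ *ᵥ y = 0) ∧
       (∀ (Z : Fin d → (L2N →L[ℂ] L2N)) (y : L2N),
          IsStrictRowContractionO Z → ContinuousLinearMap.adjoint (evalO f Z) y = 0 →
          ContinuousLinearMap.adjoint (evalO (h ·) Z) y = 0)}

def wordOp {d : ℕ} (R : Fin d → (Fock d →L[ℂ] Fock d)) (α : Word d) :
    Fock d →L[ℂ] Fock d :=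
  (α.toList.map R).prod

/-- `f` is cyclic for the right creation operators. -/
def IsNCOuter {d : ℕ} (R : Fin d → (Fock d →L[ℂ] Fock d)) (f : Fock d) : Prop :=
  (Submodule.span ℂ {g : Fock d | ∃ α : Word d, g = wordOp R α f}).topologicalClosure = ⊤

def IsNCInner {d : ℕ} (R : Fin d → (Fock d →L[ℂ] Fock d))
    (Θ : Fock d →L[ℂ] Fock d) : Prop :=
  (∀ x, ‖Θ x‖ = ‖x‖) ∧ ∀ i, Θ ∘L R i = R i ∘L Θ

/-!
Write `M_g` for left multiplication by the `r`-rescaled series `α ↦ r ^ |α| * g α`, so that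
`T = M_f`. Cauchy–Schwarz along the `|γ| + 1` factorizations of each word `γ` gives
`‖M_g‖ ≤ (1 - r)^(-1/2) ‖g‖`. Left and right multiplications commute, so `M_(R_μ f) = M_f M_(e_μ)`
and every `v = p(R) f` has `M_v = M_f B` for some `B`. Outerness provides such a `v` with
`‖e_∅ - v‖ < (1 - r)^(1/2)`, hence `‖1 - M_f B‖ < 1` and `M_f` is right invertible. This forces
`f ∅ ≠ 0`, and since `M_f` is lower triangular for word length with diagonal `f ∅`, it is injective,
hence invertible.
-/

theorem ContinuousLinearMap.isUnit_of_mul_eq_one_of_injective {R M : Type*} [Semiring R]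
    [TopologicalSpace M] [AddCommMonoid M] [Module R M] {A C : M →L[R] M} (h : A * C = 1)
    (hA : Function.Injective A) : IsUnit A :=
  ⟨⟨A, C, h, ContinuousLinearMap.ext fun x => hA congr($h (A x))⟩, rfl⟩

namespace lp

variable {ι E : Type*} [NormedAddCommGroup E]

theorem sum_norm_sq_le_norm_sq (y : lp (fun _ : ι => E) 2) (s : Finset ι) :
    ∑ i ∈ s, ‖y i‖ ^ 2 ≤ ‖y‖ ^ 2 := by
  simpa [Real.rpow_two] using lp.sum_rpow_le_norm_rpow (by norm_num) y s

theorem sum_norm_sq_mul_norm_sq_le (g x : lp (fun _ : ι => E) 2) (S : Finset (ι × ι)) :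
    ∑ p ∈ S, ‖g p.1‖ ^ 2 * ‖x p.2‖ ^ 2 ≤ ‖g‖ ^ 2 * ‖x‖ ^ 2 := by
  classical
  calc ∑ p ∈ S, ‖g p.1‖ ^ 2 * ‖x p.2‖ ^ 2
      ≤ ∑ p ∈ S.image Prod.fst ×ˢ S.image Prod.snd, ‖g p.1‖ ^ 2 * ‖x p.2‖ ^ 2 :=
        Finset.sum_le_sum_of_subset_of_nonneg
          (fun p hp => Finset.mem_product.2
            ⟨Finset.mem_image_of_mem _ hp, Finset.mem_image_of_mem _ hp⟩)
          (fun _ _ _ => by positivity)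
    _ = (∑ i ∈ S.image Prod.fst, ‖g i‖ ^ 2) * ∑ j ∈ S.image Prod.snd, ‖x j‖ ^ 2 := by
        rw [Finset.sum_product, Finset.sum_mul_sum]
    _ ≤ ‖g‖ ^ 2 * ‖x‖ ^ 2 :=
        mul_le_mul (sum_norm_sq_le_norm_sq g _) (sum_norm_sq_le_norm_sq x _)
          (by positivity) (by positivity)

end lp

namespace FreeMonoid

variable {α : Type*}

def splitAt (w : FreeMonoid α) : Fin (w.length + 1) ↪ FreeMonoid α × FreeMonoid α where
  toFun n := (ofList (w.toList.take n), ofList (w.toList.drop n))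
  inj' m n h := by
    have hlen := congrArg (fun p => p.1.toList.length) h
    have hm := m.is_lt; have hn := n.is_lt
    simp only [toList_ofList, List.length_take, length] at hlen hm hn
    omega

theorem splitAt_apply (w : FreeMonoid α) (n : Fin (w.length + 1)) :
    w.splitAt n = (ofList (w.toList.take n), ofList (w.toList.drop n)) := rfl

theorem length_splitAt_fst (w : FreeMonoid α) (n : Fin (w.length + 1)) :
    (w.splitAt n).1.length = n := by
  have := n.is_lt
  simp only [length] at this
  rw [splitAt_apply]
  simp [length]
  omega

def factorizations (w : FreeMonoid α) : Finset (FreeMonoid α × FreeMonoid α) :=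
  Finset.univ.map w.splitAt

theorem mem_factorizations {w : FreeMonoid α} {p : FreeMonoid α × FreeMonoid α} :
    p ∈ w.factorizations ↔ p.1 * p.2 = w := by
  simp only [factorizations, Finset.mem_map, Finset.mem_univ, true_and]
  constructor
  · rintro ⟨n, rfl⟩
    exact List.take_append_drop _ _
  · rintro rfl
    refine ⟨⟨p.1.length, by simp [length_mul]⟩, ?_⟩
    rw [splitAt_apply]
    ext <;> simp [length, toList_mul]

theorem length_add_length_of_mem_factorizations {w : FreeMonoid α}
    {p : FreeMonoid α × FreeMonoid α} (hp : p ∈ w.factorizations) :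
    p.1.length + p.2.length = w.length := by
  rw [← length_mul, mem_factorizations.1 hp]

theorem sum_factorizations_fst_length {M : Type*} [AddCommMonoid M] (w : FreeMonoid α)
    (f : ℕ → M) :
    ∑ p ∈ w.factorizations, f p.1.length = ∑ n ∈ Finset.range (w.length + 1), f n := by
  simp [factorizations, length_splitAt_fst, Fin.sum_univ_eq_sum_range (fun n => f n)]

theorem sum_pow_length_fst_factorizations_le {K : Type*} [Field K] [LinearOrder K]
    [IsStrictOrderedRing K] {r : K} (hr0 : 0 ≤ r) (hr1 : r < 1) (w : FreeMonoid α) :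
    ∑ p ∈ w.factorizations, r ^ p.1.length ≤ (1 - r)⁻¹ := by
  rw [sum_factorizations_fst_length, Finset.range_eq_Ico]
  simpa using geom_sum_Ico_le_of_lt_one hr0 hr1 (m := 0) (n := w.length + 1)

section rightShift

variable {M : Type*} [Zero M]

open scoped Classical in
/-- The coefficients of the right product `g * μ`; on the Fock space this is `R_μ g`. -/
noncomputable def rightShift (g : FreeMonoid α → M) (μ γ : FreeMonoid α) : M :=
  if h : ∃ β, γ = β * μ then g h.choose else 0

theorem rightShift_mul_apply (g : FreeMonoid α → M) (μ β : FreeMonoid α) :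
    rightShift g μ (β * μ) = g β := by
  have h : ∃ β', β * μ = β' * μ := ⟨β, rfl⟩
  rw [rightShift, dif_pos h, mul_right_cancel h.choose_spec.symm]

theorem rightShift_apply_of_not_exists {g : FreeMonoid α → M} {μ γ : FreeMonoid α}
    (h : ¬∃ β, γ = β * μ) : rightShift g μ γ = 0 :=
  dif_neg h

@[simp] theorem rightShift_one (g : FreeMonoid α → M) : rightShift g 1 = g := by
  ext γ
  simpa using rightShift_mul_apply g 1 γ

theorem rightShift_const_mul {R : Type*} [MulZeroClass R] (c : R) (g : FreeMonoid α → R)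
    (μ : FreeMonoid α) : rightShift (fun β => c * g β) μ = fun γ => c * rightShift g μ γ := by
  ext γ
  unfold rightShift
  split_ifs <;> simp

theorem rightShift_rightShift (g : FreeMonoid α → M) (μ ν : FreeMonoid α) :
    rightShift (rightShift g μ) ν = rightShift g (μ * ν) := by
  ext γ
  by_cases hν : ∃ β, γ = β * ν
  · obtain ⟨β, rfl⟩ := hν
    by_cases hμ : ∃ α, β = α * μ
    · obtain ⟨α, rfl⟩ := hμ
      rw [rightShift_mul_apply, rightShift_mul_apply, mul_assoc, rightShift_mul_apply]
    · rw [rightShift_mul_apply, rightShift_apply_of_not_exists hμ,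
        rightShift_apply_of_not_exists]
      rintro ⟨α, hα⟩
      exact hμ ⟨α, mul_right_cancel (hα.trans (mul_assoc _ _ _).symm)⟩
  · rw [rightShift_apply_of_not_exists hν, rightShift_apply_of_not_exists]
    rintro ⟨α, rfl⟩
    exact hν ⟨α * μ, (mul_assoc _ _ _).symm⟩

end rightShift

/-- The coefficients of `g_r * x`, where `g_r α = r ^ |α| * g α`. -/
def rescaledConv (r : ℝ) (g x : FreeMonoid α → ℂ) (γ : FreeMonoid α) : ℂ :=
  ∑ p ∈ γ.factorizations, (r : ℂ) ^ p.1.length * g p.1 * x p.2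

section rescaledConv

variable {r : ℝ}

theorem rescaledConv_apply_eq_mul {g x : FreeMonoid α → ℂ} {γ : FreeMonoid α}
    (h : ∀ p ∈ γ.factorizations, p.1 ≠ 1 → g p.1 * x p.2 = 0) :
    rescaledConv r g x γ = g 1 * x γ := by
  rw [rescaledConv, Finset.sum_eq_single_of_mem (1, γ) (mem_factorizations.2 (one_mul γ))]
  · simp
  · intro p hp hne
    have hp1 : p.1 ≠ 1 := fun h1 =>
      hne (Prod.ext h1 (by simpa [h1] using mem_factorizations.1 hp))
    rw [mul_assoc, h p hp hp1, mul_zero]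

theorem norm_sq_rescaledConv_le (hr0 : 0 ≤ r) (hr1 : r < 1) (g x : FreeMonoid α → ℂ)
    (γ : FreeMonoid α) :
    ‖rescaledConv r g x γ‖ ^ 2 ≤
      (1 - r)⁻¹ * ∑ p ∈ γ.factorizations, ‖g p.1‖ ^ 2 * ‖x p.2‖ ^ 2 := by
  have hnorm : ‖rescaledConv r g x γ‖ ≤
      ∑ p ∈ γ.factorizations, r ^ p.1.length * (‖g p.1‖ * ‖x p.2‖) := by
    refine (norm_sum_le _ _).trans (le_of_eq (Finset.sum_congr rfl fun p _ => ?_))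
    simp [abs_of_nonneg hr0, mul_assoc]
  calc ‖rescaledConv r g x γ‖ ^ 2
      ≤ (∑ p ∈ γ.factorizations, r ^ p.1.length * (‖g p.1‖ * ‖x p.2‖)) ^ 2 :=
        pow_le_pow_left₀ (norm_nonneg _) hnorm 2
    _ ≤ (∑ p ∈ γ.factorizations, r ^ p.1.length) *
          ∑ p ∈ γ.factorizations, r ^ p.1.length * (‖g p.1‖ ^ 2 * ‖x p.2‖ ^ 2) :=
        Finset.sum_sq_le_sum_mul_sum_of_sq_le_mul _ (fun _ _ => by positivity)
          (fun _ _ => by positivity) (fun _ _ => le_of_eq (by ring))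
    _ ≤ (1 - r)⁻¹ * ∑ p ∈ γ.factorizations, ‖g p.1‖ ^ 2 * ‖x p.2‖ ^ 2 :=
        mul_le_mul (sum_pow_length_fst_factorizations_le hr0 hr1 γ)
          (Finset.sum_le_sum fun _ _ =>
            mul_le_of_le_one_left (by positivity) (pow_le_one₀ hr0 hr1.le))
          (by positivity) (inv_nonneg.2 (by linarith))

theorem sum_norm_sq_rescaledConv_le (hr0 : 0 ≤ r) (hr1 : r < 1)
    (g x : lp (fun _ : FreeMonoid α => ℂ) 2) (A : Finset (FreeMonoid α)) :
    ∑ γ ∈ A, ‖rescaledConv r g x γ‖ ^ 2 ≤ (1 - r)⁻¹ * (‖g‖ ^ 2 * ‖x‖ ^ 2) := by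
  classical
  have hdisj : (A : Set (FreeMonoid α)).PairwiseDisjoint factorizations :=
    fun γ _ γ' _ hne => Finset.disjoint_left.2 fun p hp hp' =>
      hne ((mem_factorizations.1 hp).symm.trans (mem_factorizations.1 hp'))
  calc ∑ γ ∈ A, ‖rescaledConv r g x γ‖ ^ 2
      ≤ ∑ γ ∈ A, (1 - r)⁻¹ * ∑ p ∈ γ.factorizations, ‖g p.1‖ ^ 2 * ‖x p.2‖ ^ 2 :=
        Finset.sum_le_sum fun γ _ => norm_sq_rescaledConv_le hr0 hr1 g x γ
    _ = (1 - r)⁻¹ * ∑ p ∈ A.biUnion factorizations, ‖g p.1‖ ^ 2 * ‖x p.2‖ ^ 2 := by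
        rw [← Finset.mul_sum, Finset.sum_biUnion hdisj]
    _ ≤ (1 - r)⁻¹ * (‖g‖ ^ 2 * ‖x‖ ^ 2) :=
        mul_le_mul_of_nonneg_left (lp.sum_norm_sq_mul_norm_sq_le g x _)
          (inv_nonneg.2 (by linarith))

theorem memℓp_rescaledConv (hr0 : 0 ≤ r) (hr1 : r < 1)
    (g x : lp (fun _ : FreeMonoid α => ℂ) 2) :
    Memℓp (rescaledConv r g x) 2 :=
  memℓp_gen' fun A => by
    simpa [Real.rpow_two] using sum_norm_sq_rescaledConv_le hr0 hr1 g x A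

theorem norm_rescaledConv_le (hr0 : 0 ≤ r) (hr1 : r < 1)
    (g x : lp (fun _ : FreeMonoid α => ℂ) 2) :
    ‖(⟨rescaledConv r g x, memℓp_rescaledConv hr0 hr1 g x⟩ : lp (fun _ : FreeMonoid α => ℂ) 2)‖
      ≤ √(1 - r)⁻¹ * ‖g‖ * ‖x‖ := by
  refine lp.norm_le_of_forall_sum_le (by norm_num) (by positivity) fun A => ?_
  simpa [Real.rpow_two, mul_pow, Real.sq_sqrt (by linarith : 0 ≤ 1 - r), mul_assoc] using
    sum_norm_sq_rescaledConv_le hr0 hr1 g x A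

end rescaledConv

end FreeMonoid

namespace Fock

open FreeMonoid

variable {d : ℕ}

theorem inner_fockBasis_left (γ : Word d) (y : Fock d) :
    inner ℂ (fockBasis d γ) y = (y : Word d → ℂ) γ := by
  simp [lp.inner_single_left]

theorem ext_fockBasis {F : Type*} [AddCommMonoid F] [Module ℂ F] [TopologicalSpace F]
    [T2Space F] {A B : Fock d →L[ℂ] F} (h : ∀ β, A (fockBasis d β) = B (fockBasis d β)) :
    A = B :=
  lp.ext_continuousLinearMap ENNReal.ofNat_ne_top fun β => ContinuousLinearMap.ext_ring (h β)

theorem coe_apply_eq_rightShift {A : Fock d →L[ℂ] Fock d} {μ : Word d}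
    (hA : ∀ β, A (fockBasis d β) = fockBasis d (β * μ)) (y : Fock d) :
    ⇑(A y) = rightShift ⇑y μ := by
  ext γ
  by_cases hγ : ∃ β, γ = β * μ
  · obtain ⟨β, rfl⟩ := hγ
    have hcomp : (lp.evalCLM ℂ _ 2 (β * μ)).comp A = lp.evalCLM ℂ _ 2 β :=
      ext_fockBasis fun α => by simp [lp.evalCLM, hA, Pi.single_apply]
    rw [rightShift_mul_apply]
    exact congr($hcomp y)
  · have hcomp : (lp.evalCLM ℂ _ 2 γ).comp A = 0 :=
      ext_fockBasis fun α => by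
        simpa [lp.evalCLM, hA, Pi.single_apply] using fun h => hγ ⟨α, h⟩
    rw [rightShift_apply_of_not_exists hγ]
    exact congr($hcomp y)

theorem rescaledConv_fockBasis_right (r : ℝ) (g : Word d → ℂ) (β : Word d) :
    rescaledConv r g ⇑(fockBasis d β) = rightShift (fun α => (r : ℂ) ^ α.length * g α) β := by
  ext γ
  by_cases hγ : ∃ α, γ = α * β
  · obtain ⟨α, rfl⟩ := hγ
    rw [rightShift_mul_apply, rescaledConv,
      Finset.sum_eq_single_of_mem (α, β) (mem_factorizations.2 rfl)]
    · simp
    · intro p hp hne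
      have hp2 : p.2 ≠ β := fun h => hne <| Prod.ext
        (mul_right_cancel ((mem_factorizations.1 hp).trans (by rw [h]))) h
      simp [hp2]
  · rw [rightShift_apply_of_not_exists hγ]
    refine Finset.sum_eq_zero fun p hp => ?_
    have hp2 : p.2 ≠ β := fun h => hγ ⟨p.1, by rw [← mem_factorizations.1 hp, h]⟩
    simp [hp2]

section rescaledMul

variable {r : ℝ} (hr0 : 0 ≤ r) (hr1 : r < 1)

noncomputable def rescaledMul : Fock d →L[ℂ] Fock d →L[ℂ] Fock d :=
  LinearMap.mkContinuous₂
    (LinearMap.mk₂ ℂ (fun g x => ⟨rescaledConv r g x, memℓp_rescaledConv hr0 hr1 g x⟩)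
      (fun g g' x => by ext γ; simp [rescaledConv, mul_add, add_mul, Finset.sum_add_distrib]; rfl)
      (fun c g x => by ext γ; simp [rescaledConv, Finset.mul_sum, mul_assoc, mul_left_comm])
      (fun g x x' => by ext γ; simp [rescaledConv, mul_add, Finset.sum_add_distrib]; rfl)
      (fun c g x => by ext γ; simp [rescaledConv, Finset.mul_sum, mul_assoc, mul_left_comm]))
    √(1 - r)⁻¹ (norm_rescaledConv_le hr0 hr1)

theorem coe_rescaledMul_apply (g x : Fock d) :
    ⇑(rescaledMul hr0 hr1 g x) = rescaledConv r ⇑g ⇑x :=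
  rfl

theorem norm_rescaledMul_apply_le (g : Fock d) :
    ‖rescaledMul hr0 hr1 g‖ ≤ √(1 - r)⁻¹ * ‖g‖ :=
  (rescaledMul hr0 hr1 g).opNorm_le_bound (by positivity) (norm_rescaledConv_le hr0 hr1 g)

theorem rescaledMul_fockBasis_one : rescaledMul hr0 hr1 (fockBasis d 1) = 1 := by
  ext x γ
  rw [coe_rescaledMul_apply, rescaledConv_apply_eq_mul fun p _ hp => by simp [hp]]
  simp

theorem rescaledMul_fockBasis_apply_fockBasis (μ β : Word d) :
    rescaledMul hr0 hr1 (fockBasis d μ) (fockBasis d β)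
      = (r : ℂ) ^ μ.length • fockBasis d (μ * β) := by
  ext γ
  rw [coe_rescaledMul_apply, rescaledConv_fockBasis_right]
  by_cases hγ : ∃ α, γ = α * β
  · obtain ⟨α, rfl⟩ := hγ
    by_cases hα : α = μ
    · simp [rightShift_mul_apply, hα]
    · simp [rightShift_mul_apply, Pi.single_apply, hα]
  · rw [rightShift_apply_of_not_exists hγ]
    simpa [Pi.single_apply] using fun h => (hγ ⟨μ, h⟩).elim

theorem rescaledMul_eq_mul_of_coe_eq_rightShift {g v : Fock d} {μ : Word d}
    (hv : ⇑v = rightShift ⇑g μ) :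
    rescaledMul hr0 hr1 v = rescaledMul hr0 hr1 g * rescaledMul hr0 hr1 (fockBasis d μ) := by
  have hrescale : (fun α => (r : ℂ) ^ α.length * rightShift g μ α)
      = fun α => (r : ℂ) ^ μ.length * rightShift (fun α => (r : ℂ) ^ α.length * g α) μ α := by
    funext α
    by_cases h : ∃ α', α = α' * μ
    · obtain ⟨α', rfl⟩ := h
      simp only [rightShift_mul_apply, length_mul, pow_add]
      ring
    · simp [rightShift_apply_of_not_exists h]
  refine ext_fockBasis fun β => ?_
  ext γ
  rw [mul_apply_eq_comp, rescaledMul_fockBasis_apply_fockBasis, map_smul, lp.coeFn_smul,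
    coe_rescaledMul_apply, coe_rescaledMul_apply, rescaledConv_fockBasis_right,
    rescaledConv_fockBasis_right, hv, hrescale, rightShift_const_mul, rightShift_rightShift]
  rfl

theorem injective_rescaledMul {g : Fock d} (hg : (g : Word d → ℂ) 1 ≠ 0) :
    Function.Injective (rescaledMul hr0 hr1 g) := by
  refine (injective_iff_map_eq_zero _).2 fun x hx => ?_
  suffices h : ∀ n, ∀ γ : Word d, γ.length = n → (x : Word d → ℂ) γ = 0 from
    lp.ext (funext fun γ => h _ γ rfl)
  intro n
  induction n using Nat.strong_induction_on with
  | _ n ih =>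
    intro γ hγ
    have hconv : rescaledConv r g x γ = g 1 * x γ := rescaledConv_apply_eq_mul fun p hp hp1 => by
      have hlen := length_add_length_of_mem_factorizations hp
      have hp1' : p.1.length ≠ 0 := fun h => hp1 (length_eq_zero.1 h)
      rw [ih p.2.length (by omega) p.2 rfl, mul_zero]
    have h0 : rescaledConv r g x γ = 0 := by
      rw [← coe_rescaledMul_apply hr0 hr1, hx]
      rfl
    exact (mul_eq_zero.1 (hconv ▸ h0)).resolve_left hg

theorem apply_one_ne_zero_of_rescaledMul_mul_eq_one {g : Fock d} {C : Fock d →L[ℂ] Fock d}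
    (h : rescaledMul hr0 hr1 g * C = 1) : (g : Word d → ℂ) 1 ≠ 0 := by
  intro hg
  have h1 := congr(⇑($h (fockBasis d 1)) 1)
  rw [mul_apply_eq_comp, coe_rescaledMul_apply, rescaledConv_apply_eq_mul, hg, zero_mul] at h1
  · simp at h1
  · intro p hp hp1
    have hlen := length_add_length_of_mem_factorizations hp
    exact (hp1 (length_eq_zero.1 (by rw [length_one] at hlen; omega))).elim

theorem eq_rescaledMul_of_inner_fockBasis {f : Fock d} {T : Fock d →L[ℂ] Fock d}
    (hT : ∀ α β : Word d, inner ℂ (fockBasis d (α * β)) (T (fockBasis d β))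
      = (r : ℂ) ^ α.length * f α)
    (hT0 : ∀ β γ : Word d, (¬∃ α : Word d, γ = α * β) →
      inner ℂ (fockBasis d γ) (T (fockBasis d β)) = 0) :
    T = rescaledMul hr0 hr1 f := by
  refine ext_fockBasis fun β => ?_
  ext γ
  rw [coe_rescaledMul_apply, rescaledConv_fockBasis_right, ← inner_fockBasis_left]
  by_cases hγ : ∃ α, γ = α * β
  · obtain ⟨α, rfl⟩ := hγ
    rw [hT, rightShift_mul_apply]
  · rw [hT0 β γ hγ, rightShift_apply_of_not_exists hγ]

section rightCreation

variable {R : Fin d → (Fock d →L[ℂ] Fock d)}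
  (hR : ∀ (i : Fin d) (α : Word d), R i (fockBasis d α) = fockBasis d (α * FreeMonoid.of i))
include hR

theorem coe_wordOp_apply (α : Word d) (x : Fock d) :
    ⇑(wordOp R α x) = rightShift ⇑x α.reverse := by
  induction α using FreeMonoid.inductionOn' with
  | one => exact (rightShift_one _).symm
  | of_mul i β ih =>
    have hRi : ⇑(R i (wordOp R β x)) = rightShift ⇑(wordOp R β x) (of i) :=
      coe_apply_eq_rightShift (hR i) _
    rw [reverse_mul, reverse_of, ← rightShift_rightShift, ← ih, ← hRi]
    rfl

theorem exists_rescaledMul_eq_mul_of_mem_span {f v : Fock d}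
    (hv : v ∈ Submodule.span ℂ {g : Fock d | ∃ α : Word d, g = wordOp R α f}) :
    ∃ B, rescaledMul hr0 hr1 v = rescaledMul hr0 hr1 f * B := by
  induction hv using Submodule.span_induction with
  | mem g hg =>
    obtain ⟨α, rfl⟩ := hg
    exact ⟨_, rescaledMul_eq_mul_of_coe_eq_rightShift hr0 hr1 (coe_wordOp_apply hR α f)⟩
  | zero => exact ⟨0, by simp⟩
  | add x y _ _ hx hy =>
    obtain ⟨B, hB⟩ := hx
    obtain ⟨B', hB'⟩ := hy
    exact ⟨B + B', by rw [map_add, hB, hB', mul_add]⟩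
  | smul c x _ hx =>
    obtain ⟨B, hB⟩ := hx
    exact ⟨c • B, by rw [map_smul, hB, mul_smul_comm]⟩

theorem exists_rescaledMul_mul_eq_one {f : Fock d} (hf : IsNCOuter R f) :
    ∃ C, rescaledMul hr0 hr1 f * C = 1 := by
  set c := √(1 - r)⁻¹
  have hc : 0 < c := Real.sqrt_pos.2 (inv_pos.2 (by linarith))
  obtain ⟨v, hv, hdist⟩ : ∃ v ∈ Submodule.span ℂ {g : Fock d | ∃ α : Word d, g = wordOp R α f},
      dist (fockBasis d 1) v < c⁻¹ :=
    Metric.mem_closure_iff.1 (by rw [← Submodule.topologicalClosure_coe, hf]; trivial) _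
      (inv_pos.2 hc)
  obtain ⟨B, hB⟩ := exists_rescaledMul_eq_mul_of_mem_span hr0 hr1 hR hv
  have hnorm : ‖1 - rescaledMul hr0 hr1 f * B‖ < 1 :=
    calc ‖1 - rescaledMul hr0 hr1 f * B‖
        = ‖rescaledMul hr0 hr1 (fockBasis d 1 - v)‖ := by
          rw [← hB, map_sub, rescaledMul_fockBasis_one]
      _ ≤ c * ‖fockBasis d 1 - v‖ := norm_rescaledMul_apply_le hr0 hr1 _
      _ < c * c⁻¹ := by rw [← dist_eq_norm]; gcongr
      _ = 1 := mul_inv_cancel₀ hc.ne'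
  obtain ⟨u, hu⟩ : IsUnit (rescaledMul hr0 hr1 f * B) := by
    simpa using isUnit_one_sub_of_norm_lt_one hnorm
  exact ⟨B * ↑u⁻¹, by rw [← mul_assoc, ← hu, Units.mul_inv]⟩

end rightCreation

end rescaledMul

end Fock

theorem rescaled_outer_multiplier_invertible_general {d : ℕ}
    (R : Fin d → (Fock d →L[ℂ] Fock d))
    (hR : ∀ (i : Fin d) (α : Word d), R i (fockBasis d α) = fockBasis d (α * FreeMonoid.of i))
    (f : Fock d) (hf : IsNCOuter R f) (r : ℝ) (hr0 : 0 ≤ r) (hr1 : r < 1)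
    (T : Fock d →L[ℂ] Fock d)
    (hT : ∀ α β : Word d,
      (inner ℂ (fockBasis d (α * β)) (T (fockBasis d β)) : ℂ)
        = (r : ℂ) ^ (FreeMonoid.toList α).length * f α)
    (hT0 : ∀ β γ : Word d, (¬ ∃ α : Word d, γ = α * β) →
      (inner ℂ (fockBasis d γ) (T (fockBasis d β)) : ℂ) = 0) :
    IsUnit T := by
  obtain ⟨C, hC⟩ := Fock.exists_rescaledMul_mul_eq_one hr0 hr1 hR hf
  rw [Fock.eq_rescaledMul_of_inner_fockBasis hr0 hr1 hT hT0]
  exact ContinuousLinearMap.isUnit_of_mul_eq_one_of_injective hC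
    (Fock.injective_rescaledMul hr0 hr1
      (Fock.apply_one_ne_zero_of_rescaledMul_mul_eq_one hr0 hr1 hC))

/-- **Invertibility of the rescaled left multiplier of an NC outer function**
(Theorem `InvOut`).  If `f ∈ F²_d` is NC outer, `0 ≤ r < 1`, and `T` acts as left
multiplication by the `r`-rescaled power series of `f` (matrix coefficients
`⟪e_{αβ}, T e_β⟫ = r^{|α|} f(α)`, all other matrix entries zero), then `T` is
invertible in the bounded operators on `F²_d`. -/
theorem rescaled_outer_multiplier_invertible {d : ℕ} (hd : 1 ≤ d)
    (R : Fin d → (Fock d →L[ℂ] Fock d))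
    (hR : ∀ (i : Fin d) (α : Word d), R i (fockBasis d α) = fockBasis d (α * FreeMonoid.of i))
    (f : Fock d) (hf : IsNCOuter R f) (r : ℝ) (hr0 : 0 ≤ r) (hr1 : r < 1)
    (T : Fock d →L[ℂ] Fock d)
    (hT : ∀ α β : Word d,
      (inner ℂ (fockBasis d (α * β)) (T (fockBasis d β)) : ℂ)
        = (r : ℂ) ^ (FreeMonoid.toList α).length * f α)
    (hT0 : ∀ β γ : Word d, (¬ ∃ α : Word d, γ = α * β) →
      (inner ℂ (fockBasis d γ) (T (fockBasis d β)) : ℂ) = 0) :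
    IsUnit T :=
  rescaled_outer_multiplier_invertible_general R hR f hf r hr0 hr1 T hT hT0
end
end

section
/- Let V be an isometry on a complex Hilbert space H and let w ∈ ℂ with ‖w‖ < 1. Let D be the inverse of the unit 1 − (conj w)•V, set C := Real.sqrt(1 − |w|²) • D and V_w := (V − w•1) * D. Then: (a) for every x ∈ H with V* x = 0 one has ‖C x‖ = ‖x‖ and V_w* (C x) = 0; (b) conversely, for every z ∈ H with V_w* z = 0 there exists x ∈ H with V* x = 0 and C x = z. In particular, C restricts to an isometric bijection from ker V* onto ker V_w*. -/
/-!
With `c = conj w`, an isometry satisfies `V* (y - c V y) = V* y - c y`, so `x = (1 - c V) y`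
lies in `ker V*` exactly when `y` is an eigenvector of `V*` for `c`; since
`V_w* = D* (V* - c)` with `D*` injective, those eigenvectors are exactly `ker V_w*`.
Thus `D` maps `ker V*` onto `ker V_w*`, and on such `y` the Pythagorean expansion gives
`‖(1 - c V) y‖² = (1 - |w|²) ‖y‖²`, which is why the factor `√(1 - |w|²)` makes `C` isometric.
-/

open scoped ComplexConjugate
open ContinuousLinearMap

section

variable {𝕜 H : Type*} [RCLike 𝕜] [NormedAddCommGroup H] [InnerProductSpace 𝕜 H]
  [CompleteSpace H] {V : H →L[𝕜] H}

lemma adjoint_apply_sub_smul_apply (hV : ∀ x, ‖V x‖ = ‖x‖) (c : 𝕜) (y : H) :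
    adjoint V (y - c • V y) = adjoint V y - c • y := by
  have hVV : adjoint V (V y) = y := by
    simpa using congr($((norm_map_iff_adjoint_comp_self V).mp hV) y)
  rw [map_sub, map_smul, hVV]

lemma norm_sub_smul_apply_sq_of_adjoint_apply_eq (hV : ∀ x, ‖V x‖ = ‖x‖) {c : 𝕜} {y : H}
    (hy : adjoint V y = c • y) :
    ‖y - c • V y‖ ^ 2 = (1 - ‖c‖ ^ 2) * ‖y‖ ^ 2 := by
  have hinner : RCLike.re (inner 𝕜 y (c • V y)) = ‖c‖ ^ 2 * ‖y‖ ^ 2 := by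
    rw [inner_smul_right, ← adjoint_inner_left, hy, inner_smul_left,
      inner_self_eq_norm_sq_to_K, ← mul_assoc, RCLike.mul_conj]
    norm_cast
  rw [norm_sub_sq (𝕜 := 𝕜), hinner, norm_smul, hV]
  ring

lemma adjoint_apply_eq_zero_iff_of_mul_eq_one {D T : H →L[𝕜] H} (h : D * T = 1) {u : H} :
    adjoint D u = 0 ↔ u = 0 := by
  refine ⟨fun hu => ?_, fun hu => by rw [hu, map_zero]⟩
  have hTD : adjoint T (adjoint D u) = u := by
    rw [← mul_apply_eq_comp, ← star_eq_adjoint, ← star_eq_adjoint, ← star_mul, h, star_one,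
      one_apply_eq_self]
  rw [← hTD, hu, map_zero]

lemma adjoint_sub_smul_one_mul_apply (D : H →L[𝕜] H) (w : 𝕜) (u : H) :
    adjoint ((V - w • (1 : H →L[𝕜] H)) * D) u = adjoint D (adjoint V u - conj w • u) := by
  rw [← star_eq_adjoint, star_mul]
  simp only [mul_apply_eq_comp, star_sub, star_smul, star_one, star_eq_adjoint,
    sub_apply, smul_apply, one_apply_eq_self, RCLike.star_def]

end

/-- **The Crofoot transform is an isometric bijection between the defect spaces.**
Let `V` be an isometry on a complex Hilbert space `H`, `‖w‖ < 1`, and let `D` be the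
inverse of the unit `1 - (conj w)•V`.  Set `C := √(1 - |w|²) • D` and
`V_w := (V - w•1) * D`.  Then `C` maps `ker V*` isometrically onto `ker V_w*`. -/
theorem crofoot_transform {H : Type*} [NormedAddCommGroup H]
    [InnerProductSpace ℂ H] [CompleteSpace H]
    (V : H →L[ℂ] H) (hV : ∀ x, ‖V x‖ = ‖x‖) (w : ℂ) (hw : ‖w‖ < 1)
    (D : H →L[ℂ] H)
    (hD₁ : (1 - (conj w) • V) * D = 1) (hD₂ : D * (1 - (conj w) • V) = 1)
    (C : H →L[ℂ] H) (hC : C = ((Real.sqrt (1 - ‖w‖ ^ 2) : ℝ) : ℂ) • D)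
    (Vw : H →L[ℂ] H) (hVw : Vw = (V - w • (1 : H →L[ℂ] H)) * D) :
    (∀ x : H, adjoint V x = 0 → ‖C x‖ = ‖x‖ ∧ adjoint Vw (C x) = 0) ∧
      (∀ z : H, adjoint Vw z = 0 → ∃ x : H, adjoint V x = 0 ∧ C x = z) := by
  set s := Real.sqrt (1 - ‖w‖ ^ 2)
  have hw2 : 0 < 1 - ‖w‖ ^ 2 := by nlinarith [norm_nonneg w]
  have hs : 0 < s := Real.sqrt_pos.mpr hw2
  have hker_Vw (z : H) : adjoint Vw z = 0 ↔ adjoint V z = conj w • z := by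
    rw [hVw, adjoint_sub_smul_one_mul_apply, adjoint_apply_eq_zero_iff_of_mul_eq_one hD₂,
      sub_eq_zero]
  refine ⟨fun x hx => ?_, fun z hz => ?_⟩
  · set y := D x
    have hxy : y - conj w • V y = x := by simpa using congr($hD₁ x)
    have hy : adjoint V y = conj w • y := by
      rw [← sub_eq_zero, ← adjoint_apply_sub_smul_apply hV, hxy, hx]
    have hCx : C x = (s : ℂ) • y := by rw [hC, smul_apply]
    refine ⟨?_, by rw [hCx, map_smul, (hker_Vw y).mpr hy, smul_zero]⟩
    have hnorm := norm_sub_smul_apply_sq_of_adjoint_apply_eq hV hy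
    rw [hxy, RCLike.norm_conj, ← Real.sq_sqrt hw2.le, ← mul_pow] at hnorm
    rw [hCx, norm_smul, Complex.norm_real, Real.norm_of_nonneg hs.le,
      (pow_left_inj₀ (norm_nonneg x) (by positivity) two_ne_zero).mp hnorm]
  · refine ⟨(s : ℂ)⁻¹ • (z - conj w • V z), ?_, ?_⟩
    · rw [map_smul, adjoint_apply_sub_smul_apply hV, (hker_Vw z).mp hz, sub_self, smul_zero]
    · have hDz : D (z - conj w • V z) = z := by simpa using congr($hD₂ z)
      rw [hC, smul_apply, map_smul, hDz, smul_smul,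
        mul_inv_cancel₀ (by exact_mod_cast hs.ne'), one_smul]
end

section
/- Let V be an isometry on a complex Hilbert space H, let c ∈ ℂ with ‖c‖ < 1 (so 1 − c•V is a unit), and let h ∈ H satisfy V* h = 0. Then V* ((1 − c•V)⁻¹ h) = c • ((1 − c•V)⁻¹ h), i.e. (1 − c•V)⁻¹ h is an eigenvector of V* with eigenvalue c. Consequently, for every w ∈ ℂ with ‖w‖ < 1 and every x ∈ H with V* x = (conj w) • x, the adjoint of the Frostman shift V_w := (V − w•1)*(1 − (conj w)•V)⁻¹ annihilates x: V_w* x = 0. -/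
noncomputable section

open scoped ComplexConjugate
open ContinuousLinearMap

/-- Let `V` be an isometry on a complex Hilbert space and `‖c‖ < 1` (so `1 - c•V` is a
unit).  If `V* h = 0` then `(1 - c•V)⁻¹ h` is an eigenvector of `V*` with eigenvalue `c`.
Consequently, if `V* x = (conj w) • x` with `‖w‖ < 1`, then the adjoint of the Frostman
shift `V_w := (V - w•1)(1 - (conj w)•V)⁻¹` annihilates `x`. -/
theorem frostman_shift_adjoint_eigenvector {H : Type*} [NormedAddCommGroup H]
    [InnerProductSpace ℂ H] [CompleteSpace H]
    (V : H →L[ℂ] H) (hV : ∀ x, ‖V x‖ = ‖x‖) (c : ℂ) (hc : ‖c‖ < 1) :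
    IsUnit (1 - c • V) ∧
      (∀ h : H, adjoint V h = 0 →
        adjoint V (Ring.inverse (1 - c • V) h) = c • (Ring.inverse (1 - c • V) h)) ∧
      (∀ w : ℂ, ‖w‖ < 1 → ∀ x : H, adjoint V x = (conj w) • x →
        adjoint ((V - w • (1 : H →L[ℂ] H)) * Ring.inverse (1 - (conj w) • V)) x = 0) := by
  have hVnorm : ‖V‖ ≤ 1 := V.opNorm_le_bound zero_le_one (fun x => by simp [hV x])
  have hnorm : ‖c • V‖ < 1 := by
    calc ‖c • V‖ = ‖c‖ * ‖V‖ := norm_smul _ _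
    _ ≤ ‖c‖ * 1 := by gcongr
    _ = ‖c‖ := mul_one _
    _ < 1 := hc
  have hUnit : IsUnit (1 - c • V) := (Units.oneSub (c • V) hnorm).isUnit
  have hadjV : ∀ u : H, adjoint V (V u) = u := by
    intro u
    apply ext_inner_right ℂ
    intro y
    rw [adjoint_inner_left]
    exact LinearIsometry.inner_map_map ⟨V.toLinearMap, hV⟩ u y
  refine ⟨hUnit, ?_, ?_⟩
  · intro h hh
    set u := Ring.inverse (1 - c • V) h with hu
    have key : (1 - c • V) u = h := by
      have := Ring.mul_inverse_cancel _ hUnit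
      calc (1 - c • V) u = ((1 - c • V) * Ring.inverse (1 - c • V)) h := rfl
      _ = (1 : H →L[ℂ] H) h := by rw [this]
      _ = h := rfl
    have : adjoint V ((1 - c • V) u) = 0 := by rw [key, hh]
    have expand : adjoint V ((1 - c • V) u) = adjoint V u - c • u := by
      simp [sub_apply, smul_apply, map_sub, map_smul, hadjV u]
    rw [expand] at this
    have := sub_eq_zero.mp this
    simpa using this
  · intro w hw x hx
    have h1 : adjoint ((V - w • (1 : H →L[ℂ] H)) * Ring.inverse (1 - (conj w) • V))
        = adjoint (Ring.inverse (1 - (conj w) • V)) ∘L adjoint (V - w • (1 : H →L[ℂ] H)) := by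
      rw [show (V - w • (1 : H →L[ℂ] H)) * Ring.inverse (1 - (conj w) • V)
        = (V - w • (1 : H →L[ℂ] H)) ∘L Ring.inverse (1 - (conj w) • V) from rfl, adjoint_comp]
    have h2 : adjoint (V - w • (1 : H →L[ℂ] H)) x = 0 := by
      rw [map_sub]
      simp only [sub_apply]
      rw [hx]
      have : adjoint (w • (1 : H →L[ℂ] H)) = conj w • (1 : H →L[ℂ] H) := by
        rw [← star_eq_adjoint, star_smul, star_one]; rfl
      rw [this]
      simp
    rw [h1, comp_apply, h2, map_zero]
end
end

section
/- Let Z = (Z_1,…,Z_d) be a strict row contraction of n×n complex matrices and let y, v ∈ ℂⁿ. Define k : 𝔽^d → ℂ by k(α) := ⟪Z^α v, y⟫ (Euclidean inner product on ℂⁿ, conjugate-linear in the first argument). Then k ∈ F²_d (i.e. Memℓp k 2), and for every f ∈ F²_d the reproducing formula ⟪k, f⟫_{F²_d} = ⟪y, f(Z) v⟫_{ℂⁿ} holds, where f(Z) := ∑'_α f(α) • Z^α. -/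
/-!
Positive definiteness of `1 - ∑ᵢ Zᵢ Zᵢᴴ` in finite dimensions gives `r < 1` with
`∑ᵢ ‖Zᵢᴴ x‖² ≤ r ‖x‖²`. Peeling off the first letter of a word, the words of length `m`
contribute at most `rᵐ ‖y‖²` to `∑_α ‖(Z^α)ᴴ y‖²`, so `α ↦ (Z^α)ᴴ y` is square-summable, and so is
`k(α) = ⟪v, (Z^α)ᴴ y⟫` by Cauchy–Schwarz. For basis vectors `y, v` the kernel is the conjugate of
a matrix entry of `Z^α`, so `f(Z) = ∑ f(α) Z^α` converges entrywise (ℓ² against ℓ²), and pairing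
it with `y` and `v` termwise gives `⟪k, f⟫`.
-/

noncomputable section

open scoped ComplexConjugate
open Matrix
open scoped ComplexOrder

open WithLp (toLp)

section Contraction

variable {n : Type} [Fintype n]

lemma star_dotProduct_self_eq_norm_sq (x : n → ℂ) :
    star x ⬝ᵥ x = ((‖toLp 2 x‖ ^ 2 : ℝ) : ℂ) := by
  rw [dotProduct_comm, ← EuclideanSpace.inner_toLp_toLp, inner_self_eq_norm_sq_to_K]
  push_cast
  rfl

lemma star_dotProduct_mul_conjTranspose_mulVec (A : Matrix n n ℂ) (x : n → ℂ) :
    star x ⬝ᵥ (A * Aᴴ) *ᵥ x = ((‖toLp 2 (Aᴴ *ᵥ x)‖ ^ 2 : ℝ) : ℂ) := by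
  rw [← mulVec_mulVec, dotProduct_mulVec, ← star_dotProduct_self_eq_norm_sq, star_mulVec,
    conjTranspose_conjTranspose]

lemma star_dotProduct_sum_mul_conjTranspose_mulVec {ι : Type*} (s : Finset ι)
    (A : ι → Matrix n n ℂ) (x : n → ℂ) :
    star x ⬝ᵥ (∑ i ∈ s, A i * (A i)ᴴ) *ᵥ x = ((∑ i ∈ s, ‖toLp 2 ((A i)ᴴ *ᵥ x)‖ ^ 2 : ℝ) : ℂ) := by
  simp only [sum_mulVec, dotProduct_sum, star_dotProduct_mul_conjTranspose_mulVec]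
  push_cast
  rfl

variable [DecidableEq n]

open scoped MatrixOrder in
lemma IsStrictRowContraction.exists_sum_norm_sq_le {d : ℕ} {Z : Fin d → Matrix n n ℂ}
    (hZ : IsStrictRowContraction Z) :
    ∃ r : ℝ, 0 ≤ r ∧ r < 1 ∧
      ∀ x : n → ℂ, ∑ i, ‖toLp 2 ((Z i)ᴴ *ᵥ x)‖ ^ 2 ≤ r * ‖toLp 2 x‖ ^ 2 := by
  rcases isEmpty_or_nonempty n with hn | hn
  · exact ⟨0, le_rfl, one_pos, fun x => by simp [Subsingleton.elim x 0]⟩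
  obtain ⟨c, hc, hcZ⟩ := (CFC.exists_pos_algebraMap_le_iff hZ.isHermitian.isSelfAdjoint).2
    fun _ hx => hZ.isStrictlyPositive.spectrum_pos hx
  refine ⟨max (1 - c) 0, le_max_right _ _, max_lt (by linarith) one_pos, fun x => ?_⟩
  have hx := (Matrix.le_iff.1 hcZ).re_dotProduct_nonneg x
  rw [Algebra.algebraMap_eq_smul_one, sub_mulVec, sub_mulVec, smul_mulVec, one_mulVec,
    dotProduct_sub, dotProduct_sub, dotProduct_smul, star_dotProduct_sum_mul_conjTranspose_mulVec,
    star_dotProduct_self_eq_norm_sq] at hx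
  simp only [map_sub, Complex.real_smul, ← Complex.ofReal_mul, RCLike.re_to_complex,
    Complex.ofReal_re] at hx
  nlinarith [le_max_left (1 - c) 0, sq_nonneg ‖toLp 2 x‖]

end Contraction

section Words

variable {d : ℕ} {n : Type} [Fintype n] [DecidableEq n]

lemma wordProdM_of (Z : Fin d → Matrix n n ℂ) (i : Fin d) :
    wordProdM Z (FreeMonoid.of i) = Z i := by
  simp [wordProdM]

lemma wordProdM_mul (Z : Fin d → Matrix n n ℂ) (α β : Word d) :
    wordProdM Z (α * β) = wordProdM Z α * wordProdM Z β := by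
  simp [wordProdM]

lemma sum_norm_sq_conjTranspose_wordProdM_mulVec_le {Z : Fin d → Matrix n n ℂ} {r : ℝ}
    (hr : 0 ≤ r) (hZ : ∀ x : n → ℂ, ∑ i, ‖toLp 2 ((Z i)ᴴ *ᵥ x)‖ ^ 2 ≤ r * ‖toLp 2 x‖ ^ 2)
    (m : ℕ) (x : n → ℂ) :
    ∑ w : Fin m → Fin d, ‖toLp 2 ((wordProdM Z (FreeMonoid.ofList (List.ofFn w)))ᴴ *ᵥ x)‖ ^ 2
      ≤ r ^ m * ‖toLp 2 x‖ ^ 2 := by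
  induction m generalizing x with
  | zero => simp [wordProdM]
  | succ m ih =>
    rw [← (Fin.consEquiv fun _ => Fin d).sum_comp, Fintype.sum_prod_type]
    calc _ = ∑ i, ∑ w : Fin m → Fin d,
          ‖toLp 2 ((wordProdM Z (FreeMonoid.ofList (List.ofFn w)))ᴴ *ᵥ ((Z i)ᴴ *ᵥ x))‖ ^ 2 := by
          simp [Fin.consEquiv, List.ofFn_succ, wordProdM_mul, wordProdM_of, conjTranspose_mul]
      _ ≤ ∑ i, r ^ m * ‖toLp 2 ((Z i)ᴴ *ᵥ x)‖ ^ 2 := Finset.sum_le_sum fun i _ => ih _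
      _ ≤ r ^ m * (r * ‖toLp 2 x‖ ^ 2) := by
          rw [← Finset.mul_sum]
          exact mul_le_mul_of_nonneg_left (hZ x) (pow_nonneg hr m)
      _ = r ^ (m + 1) * ‖toLp 2 x‖ ^ 2 := by ring

lemma summable_norm_sq_conjTranspose_wordProdM_mulVec {Z : Fin d → Matrix n n ℂ} {r : ℝ}
    (hr₀ : 0 ≤ r) (hr₁ : r < 1)
    (hZ : ∀ x : n → ℂ, ∑ i, ‖toLp 2 ((Z i)ᴴ *ᵥ x)‖ ^ 2 ≤ r * ‖toLp 2 x‖ ^ 2) (x : n → ℂ) :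
    Summable fun α : Word d => ‖toLp 2 ((wordProdM Z α)ᴴ *ᵥ x)‖ ^ 2 := by
  let byLength : (Σ m, Fin m → Fin d) ≃ Word d :=
    (FreeMonoid.toList.trans List.equivSigmaTuple).symm
  rw [← byLength.summable_iff, Function.comp_def, summable_sigma_of_nonneg fun _ => sq_nonneg _]
  refine ⟨fun _ => .of_finite, .of_nonneg_of_le (fun _ => tsum_nonneg fun _ => sq_nonneg _)
    (fun m => ?_) ((summable_geometric_of_lt_one hr₀ hr₁).mul_right (‖toLp 2 x‖ ^ 2))⟩
  rw [tsum_fintype]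
  exact sum_norm_sq_conjTranspose_wordProdM_mulVec_le hr₀ hZ m x

lemma IsStrictRowContraction.memℓp_conjTranspose_wordProdM_mulVec {Z : Fin d → Matrix n n ℂ}
    (hZ : IsStrictRowContraction Z) (x : n → ℂ) :
    Memℓp (fun α : Word d => toLp 2 ((wordProdM Z α)ᴴ *ᵥ x)) 2 := by
  obtain ⟨r, hr₀, hr₁, hr⟩ := hZ.exists_sum_norm_sq_le
  apply memℓp_gen
  simpa using summable_norm_sq_conjTranspose_wordProdM_mulVec hr₀ hr₁ hr x

end Words

section Kernel

variable {d : ℕ} {n : Type} [Fintype n] [DecidableEq n]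

def szegoKernel (Z : Fin d → Matrix n n ℂ) (y v : n → ℂ) (α : Word d) : ℂ :=
  star (wordProdM Z α *ᵥ v) ⬝ᵥ y

lemma szegoKernel_eq_inner (Z : Fin d → Matrix n n ℂ) (y v : n → ℂ) (α : Word d) :
    szegoKernel Z y v α = inner ℂ (toLp 2 v) (toLp 2 ((wordProdM Z α)ᴴ *ᵥ y)) := by
  rw [szegoKernel, star_mulVec, ← dotProduct_mulVec, EuclideanSpace.inner_toLp_toLp,
    dotProduct_comm]

lemma IsStrictRowContraction.memℓp_szegoKernel {Z : Fin d → Matrix n n ℂ}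
    (hZ : IsStrictRowContraction Z) (y v : n → ℂ) : Memℓp (szegoKernel Z y v) 2 :=
  ((hZ.memℓp_conjTranspose_wordProdM_mulVec y).norm.const_mul ‖toLp 2 v‖).mono fun α => by
    rw [szegoKernel_eq_inner]
    exact norm_inner_le_norm _ _

lemma inner_szegoKernel (Z : Fin d → Matrix n n ℂ) (y v : n → ℂ) (α : Word d) (c : ℂ) :
    inner ℂ (szegoKernel Z y v α) c = star y ⬝ᵥ (c • wordProdM Z α) *ᵥ v := by
  rw [RCLike.inner_apply', szegoKernel, star_dotProduct, starRingEnd_apply, star_star,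
    smul_mulVec, dotProduct_smul, smul_eq_mul, mul_comm]

lemma inner_szegoKernel_single (Z : Fin d → Matrix n n ℂ) (i j : n) (α : Word d) (c : ℂ) :
    inner ℂ (szegoKernel Z (Pi.single i 1) (Pi.single j 1) α) c = (c • wordProdM Z α) i j := by
  rw [inner_szegoKernel]
  simp

lemma IsStrictRowContraction.hasSum_evalM {Z : Fin d → Matrix n n ℂ}
    (hZ : IsStrictRowContraction Z) (f : Fock d) :
    HasSum (fun α => f α • wordProdM Z α) (evalM (f ·) Z) := by
  refine Summable.hasSum (Pi.summable.2 fun i => Pi.summable.2 fun j => ?_)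
  exact (lp.summable_inner (⟨_, hZ.memℓp_szegoKernel (Pi.single i 1) (Pi.single j 1)⟩ : Fock d)
    f).congr fun α => inner_szegoKernel_single Z i j α (f α)

lemma IsStrictRowContraction.hasSum_inner_szegoKernel {Z : Fin d → Matrix n n ℂ}
    (hZ : IsStrictRowContraction Z) (y v : n → ℂ) (f : Fock d) :
    HasSum (fun α => inner ℂ (szegoKernel Z y v α) (f α)) (star y ⬝ᵥ evalM (f ·) Z *ᵥ v) := by
  let pairing : Matrix n n ℂ →+ ℂ :=
    AddMonoidHom.mk' (fun M => star y ⬝ᵥ M *ᵥ v) fun M N => by rw [add_mulVec, dotProduct_add]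
  have hpairing : Continuous pairing :=
    continuous_const.dotProduct (continuous_id.matrix_mulVec continuous_const)
  simp only [inner_szegoKernel]
  exact (hZ.hasSum_evalM f).map pairing hpairing

end Kernel

/-- **NC Szegő kernel vectors and the reproducing formula.**
For a strict row contraction `Z` and vectors `y, v ∈ ℂⁿ`, the coefficient sequence
`k(α) = ⟪Z^α v, y⟫` is square-summable and `⟪k, f⟫ = ⟪y, f(Z) v⟫` for every
`f ∈ F²_d`. -/
theorem szego_kernel_reproducing {d n : ℕ}
    (Z : Fin d → Matrix (Fin n) (Fin n) ℂ) (hZ : IsStrictRowContraction Z)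
    (y v : Fin n → ℂ) :
    ∃ hk : (fun α : Word d => dotProduct (star (wordProdM Z α *ᵥ v)) y) ∈
        lp (fun _ : Word d => ℂ) 2,
      ∀ f : Fock d,
        (inner ℂ (⟨_, hk⟩ : Fock d) f : ℂ)
          = dotProduct (star y) (evalM (f ·) Z *ᵥ v) := by
  exact ⟨hZ.memℓp_szegoKernel y v, fun f =>
    (lp.hasSum_inner _ f).unique (hZ.hasSum_inner_szegoKernel y v f)⟩
end
end

section
/- Let f, g ∈ F²_d and 0 ≤ r < 1. Define h : 𝔽^d → ℂ by h(γ) := ∑ over all factorizations γ = α·β (a finite sum, one term for each prefix α of γ) of r^{|α|} · f(α) · g(β). Then h ∈ F²_d (Memℓp h 2) and ‖h‖_{F²_d} ≤ (1 − r²)^{-1/2} · ‖f‖_{F²_d} · ‖g‖_{F²_d}. (This expresses that the left multiplier f(rL) is bounded on F²_d with norm at most ‖f‖·(1 − r²)^{-1/2}.) -/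
noncomputable section

open scoped ComplexConjugate
open Matrix
open scoped ComplexOrder

/-! Cauchy–Schwarz against the weights `r ^ j` gives the pointwise bound
`|h γ|² ≤ (1 - r²)⁻¹ ∑_{αβ = γ} |f α|² |g β|²`. Since `(α, β) ↦ (αβ, |α|)` is a bijection onto
words with a cut position, the right-hand side sums over `γ` to `(1 - r²)⁻¹ ‖f‖² ‖g‖²`. -/

theorem sum_fin_pow_sq_le {ρ : ℝ} (hρ0 : 0 ≤ ρ) (hρ1 : ρ < 1) (n : ℕ) :
    ∑ j : Fin n, (ρ ^ (j : ℕ)) ^ 2 ≤ (1 - ρ ^ 2)⁻¹ := by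
  have hρ2 : ρ ^ 2 < 1 := by nlinarith
  calc ∑ j : Fin n, (ρ ^ (j : ℕ)) ^ 2 = ∑ j ∈ Finset.Ico 0 n, (ρ ^ 2) ^ j := by
        rw [Fin.sum_univ_eq_sum_range (fun j => (ρ ^ j) ^ 2), Finset.range_eq_Ico]
        simp only [← pow_mul, mul_comm]
    _ ≤ (ρ ^ 2) ^ 0 / (1 - ρ ^ 2) := geom_sum_Ico_le_of_lt_one (sq_nonneg ρ) hρ2
    _ = (1 - ρ ^ 2)⁻¹ := by simp

theorem norm_sum_pow_mul_sq_le {𝕜 : Type*} [NormedField 𝕜] {r : 𝕜} (hr : ‖r‖ < 1) {n : ℕ}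
    (c : Fin n → 𝕜) :
    ‖∑ j : Fin n, r ^ (j : ℕ) * c j‖ ^ 2 ≤ (1 - ‖r‖ ^ 2)⁻¹ * ∑ j, ‖c j‖ ^ 2 := by
  calc ‖∑ j : Fin n, r ^ (j : ℕ) * c j‖ ^ 2 ≤ (∑ j : Fin n, ‖r‖ ^ (j : ℕ) * ‖c j‖) ^ 2 := by
        gcongr
        exact (norm_sum_le _ _).trans_eq (by simp only [norm_mul, norm_pow])
    _ ≤ (∑ j : Fin n, (‖r‖ ^ (j : ℕ)) ^ 2) * ∑ j, ‖c j‖ ^ 2 :=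
        Finset.sum_mul_sq_le_sq_mul_sq _ _ _
    _ ≤ (1 - ‖r‖ ^ 2)⁻¹ * ∑ j, ‖c j‖ ^ 2 := by
        gcongr
        exact sum_fin_pow_sq_le (norm_nonneg r) hr n

namespace FreeMonoid

variable {α : Type*}

def factorizationEquiv :
    (FreeMonoid α × FreeMonoid α) ≃ Σ γ : FreeMonoid α, Fin (γ.toList.length + 1) where
  toFun p := ⟨p.1 * p.2, ⟨p.1.toList.length, by simp [toList_mul]⟩⟩
  invFun q := (ofList (q.1.toList.take q.2), ofList (q.1.toList.drop q.2))
  left_inv := by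
    rintro ⟨a, b⟩
    simp [toList_mul]
  right_inv := by
    rintro ⟨γ, j⟩
    have hmul : ofList (γ.toList.take j) * ofList (γ.toList.drop j) = γ :=
      toList.injective (by simp [toList_mul])
    dsimp only
    refine Sigma.ext hmul ?_
    rw [Fin.heq_ext_iff (congrArg (fun w => w.toList.length + 1) hmul)]
    simp [Nat.lt_succ_iff.mp j.2]

theorem hasSum_sum_factorizations {A B : FreeMonoid α → ℝ} {a b : ℝ}
    (hA : HasSum A a) (hB : HasSum B b) (hA0 : 0 ≤ A) (hB0 : 0 ≤ B) :
    HasSum (fun γ : FreeMonoid α => ∑ j : Fin (γ.toList.length + 1),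
      A (ofList (γ.toList.take j)) * B (ofList (γ.toList.drop j))) (a * b) := by
  have hprod : HasSum (fun p : FreeMonoid α × FreeMonoid α => A p.1 * B p.2) (a * b) :=
    hA.mul hB (hA.summable.mul_of_nonneg hB.summable hA0 hB0)
  exact (factorizationEquiv.symm.hasSum_iff.mpr hprod).sigma fun γ => hasSum_fintype _

theorem norm_sum_factorizations_sq_le {𝕜 : Type*} [NormedField 𝕜] {r : 𝕜}
    (hr : ‖r‖ < 1) (F G : FreeMonoid α → 𝕜) (γ : FreeMonoid α) :
    ‖∑ j : Fin (γ.toList.length + 1),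
        r ^ (j : ℕ) * F (ofList (γ.toList.take j)) * G (ofList (γ.toList.drop j))‖ ^ 2 ≤
      (1 - ‖r‖ ^ 2)⁻¹ * ∑ j : Fin (γ.toList.length + 1),
        ‖F (ofList (γ.toList.take j))‖ ^ 2 * ‖G (ofList (γ.toList.drop j))‖ ^ 2 := by
  simpa only [norm_mul, mul_pow, ← mul_assoc] using
    norm_sum_pow_mul_sq_le hr fun j => F (ofList (γ.toList.take j)) * G (ofList (γ.toList.drop j))

end FreeMonoid

namespace lp

variable {ι : Type*} {E : ι → Type*} [∀ i, NormedAddCommGroup (E i)]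

theorem hasSum_norm_sq (x : lp E 2) : HasSum (fun i => ‖x i‖ ^ 2) (‖x‖ ^ 2) := by
  simpa using lp.hasSum_norm (p := 2) (by norm_num) x

theorem norm_le_sqrt_of_sq_le (x : lp E 2) {u : ι → ℝ} {s : ℝ} (hu : HasSum u s)
    (hx : ∀ i, ‖x i‖ ^ 2 ≤ u i) : ‖x‖ ≤ √s :=
  Real.le_sqrt_of_sq_le (hasSum_le hx (hasSum_norm_sq x) hu)

end lp

theorem memℓp_two_of_sq_le {ι : Type*} {E : ι → Type*} [∀ i, NormedAddCommGroup (E i)]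
    {x : ∀ i, E i} {u : ι → ℝ} (hu : Summable u) (hx : ∀ i, ‖x i‖ ^ 2 ≤ u i) : Memℓp x 2 :=
  memℓp_gen (by simpa using hu.of_nonneg_of_le (fun i => sq_nonneg _) hx)

/-- **Boundedness of the rescaled left multiplier `f(rL)`.**
For `f, g ∈ F²_d` and `0 ≤ r < 1`, the `r`-rescaled free convolution `h` of `f` and `g`
belongs to `F²_d` with `‖h‖ ≤ (1 - r²)^{-1/2} ‖f‖ ‖g‖`. -/
theorem rescaled_multiplier_bound {d : ℕ} (f g : Fock d) (r : ℝ)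
    (hr0 : 0 ≤ r) (hr1 : r < 1) :
    ∃ hh : (fun γ : Word d =>
        ∑ j : Fin ((FreeMonoid.toList γ).length + 1),
          (r : ℂ) ^ (j : ℕ)
            * f (FreeMonoid.ofList ((FreeMonoid.toList γ).take (j : ℕ)))
            * g (FreeMonoid.ofList ((FreeMonoid.toList γ).drop (j : ℕ)))) ∈
        lp (fun _ : Word d => ℂ) 2,
      ‖(⟨_, hh⟩ : Fock d)‖ ≤ (Real.sqrt (1 - r ^ 2))⁻¹ * (‖f‖ * ‖g‖) := by
  have hnorm_r : ‖(r : ℂ)‖ = r := by simp [hr0]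
  have hsum := FreeMonoid.hasSum_sum_factorizations (lp.hasSum_norm_sq f) (lp.hasSum_norm_sq g)
    (fun _ => sq_nonneg _) (fun _ => sq_nonneg _)
  have hbound := FreeMonoid.norm_sum_factorizations_sq_le (hnorm_r.symm ▸ hr1) ⇑f ⇑g
  rw [hnorm_r] at hbound
  have hweighted := hsum.mul_left (1 - r ^ 2)⁻¹
  refine ⟨memℓp_two_of_sq_le hweighted.summable hbound, ?_⟩
  refine (lp.norm_le_sqrt_of_sq_le _ hweighted hbound).trans_eq ?_
  rw [Real.sqrt_mul (inv_nonneg.mpr (by nlinarith)), Real.sqrt_inv, Real.sqrt_mul (sq_nonneg _),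
    Real.sqrt_sq (norm_nonneg _), Real.sqrt_sq (norm_nonneg _)]
end
end

section
/- Let H be a complex Hilbert space, ι an index type, and R : ι → (H →L[ℂ] H) a family of operators with R_i* ∘ R_j equal to the identity if i = j and equal to 0 if i ≠ j (isometries with pairwise orthogonal ranges). Let (Q_n)_{n∈ℕ} be a sequence of orthogonal projections on H (self-adjoint idempotent bounded operators) and Q an orthogonal projection such that Q_n x → Q x for every x ∈ H. Then for every x ∈ H: the families i ↦ R_i (Q_n (R_i* x)) and i ↦ R_i (Q (R_i* x)) are summable, and Q_n x − ∑'_i R_i (Q_n (R_i* x)) converges to Q x − ∑'_i R_i (Q (R_i* x)) as n → ∞. (Strong convergence of range projections implies strong convergence of the associated wandering-space projections.) -/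
noncomputable section

open ContinuousLinearMap Filter

local notation "⟪" x ", " y "⟫" => @inner ℂ _ _ x y

section aux

variable {H : Type*} [NormedAddCommGroup H] [InnerProductSpace ℂ H] [CompleteSpace H]

/-- A self-adjoint idempotent continuous linear map is a contraction. -/
lemma proj_norm_le {P : H →L[ℂ] H} (hidem : P ∘L P = P) (hsa : IsSelfAdjoint P) (z : H) :
    ‖P z‖ ≤ ‖z‖ := by
  have h1 : ‖P z‖ ^ 2 = RCLike.re ⟪P z, P z⟫ := by
    rw [inner_self_eq_norm_sq]
  have h2 : ⟪P z, P z⟫ = ⟪z, P z⟫ := by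
    have := hsa.adjoint_eq
    calc ⟪P z, P z⟫ = ⟪z, ContinuousLinearMap.adjoint P (P z)⟫ := by
          rw [ContinuousLinearMap.adjoint_inner_right]
      _ = ⟪z, P (P z)⟫ := by rw [this]
      _ = ⟪z, (P ∘L P) z⟫ := rfl
      _ = ⟪z, P z⟫ := by rw [hidem]
  have h3 : ‖P z‖ ^ 2 ≤ ‖z‖ * ‖P z‖ := by
    rw [h1, h2]
    exact (re_inner_le_norm z (P z))
  rcases eq_or_lt_of_le (norm_nonneg (P z)) with h | h
  · rw [← h]; exact norm_nonneg z
  · nlinarith [h3]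

/-- For an orthogonal family, a convergent sum of orthogonal vectors has
norm-squared equal to the sum of the norms squared. -/
lemma hasSum_norm_sq_of_orthogonal {ι : Type*} {V : ι → (H →ₗᵢ[ℂ] H)}
    (hV : OrthogonalFamily ℂ (fun _ : ι => H) V) (f : ι → H) {S : H}
    (hS : HasSum (fun i => V i (f i)) S) :
    HasSum (fun i => ‖f i‖ ^ 2) (‖S‖ ^ 2) := by
  have h1 : Tendsto (fun s : Finset ι => ‖∑ i ∈ s, V i (f i)‖) atTop (nhds ‖S‖) :=
    (continuous_norm.tendsto S).comp hS
  have h2 : Tendsto (fun s : Finset ι => ‖∑ i ∈ s, V i (f i)‖ ^ 2) atTop (nhds (‖S‖ ^ 2)) :=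
    h1.pow 2
  have h3 : (fun s : Finset ι => ‖∑ i ∈ s, V i (f i)‖ ^ 2)
      = fun s : Finset ι => ∑ i ∈ s, ‖f i‖ ^ 2 := by
    funext s; exact hV.norm_sum f s
  rw [HasSum]
  rwa [h3] at h2

end aux

set_option maxHeartbeats 1000000 in
/-- **Strong convergence of range projections implies strong convergence of the
wandering-space projections.**  Given a row isometry `R = (R_i)` (isometries with
pairwise orthogonal ranges) and orthogonal projections `Q_n → Q` strongly, the
sums `∑'_i R_i Q_n R_i* x` are well-defined and
`Q_n x − ∑'_i R_i Q_n R_i* x → Q x − ∑'_i R_i Q R_i* x` for every `x`. -/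
theorem wandering_projections_strong_convergence {H : Type*} [NormedAddCommGroup H]
    [InnerProductSpace ℂ H] [CompleteSpace H] {ι : Type*} [DecidableEq ι]
    (R : ι → (H →L[ℂ] H))
    (hR : ∀ i j, adjoint (R i) ∘L R j = if i = j then 1 else 0)
    (Q : ℕ → (H →L[ℂ] H)) (Qlim : H →L[ℂ] H)
    (hQidem : ∀ n, Q n ∘L Q n = Q n) (hQsa : ∀ n, IsSelfAdjoint (Q n))
    (hQlimidem : Qlim ∘L Qlim = Qlim) (hQlimsa : IsSelfAdjoint Qlim)
    (hconv : ∀ x : H, Tendsto (fun n => Q n x) atTop (nhds (Qlim x))) :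
    ∀ x : H,
      (∀ n, Summable fun i => R i (Q n (adjoint (R i) x))) ∧
      (Summable fun i => R i (Qlim (adjoint (R i) x))) ∧
      Tendsto (fun n => Q n x - ∑' i, R i (Q n (adjoint (R i) x))) atTop
        (nhds (Qlim x - ∑' i, R i (Qlim (adjoint (R i) x)))) := by
  -- inner product identities for the row isometry
  have hinner : ∀ i j (v w : H), ⟪R i v, R j w⟫ = if i = j then ⟪v, w⟫ else 0 := by
    intro i j v w
    have : ⟪R i v, R j w⟫ = ⟪v, (adjoint (R i) ∘L R j) w⟫ := by
      rw [ContinuousLinearMap.comp_apply, ← ContinuousLinearMap.adjoint_inner_right]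
    rw [this, hR i j]
    split_ifs with h
    · simp
    · simp
  -- each `R i` as a linear isometry
  let V : ι → (H →ₗᵢ[ℂ] H) := fun i =>
    LinearMap.isometryOfInner (R i : H →ₗ[ℂ] H) (by
      intro v w
      have := hinner i i v w
      simpa using this)
  have hVapp : ∀ i (v : H), V i v = R i v := fun i v => rfl
  have hortho : OrthogonalFamily ℂ (fun _ : ι => H) V := by
    intro i j hij v w
    have := hinner i j v w
    simpa [hVapp, if_neg hij] using this
  intro x
  -- summability of ∑ ‖R_i* x‖²
  have hbase : Summable fun i => ‖adjoint (R i) x‖ ^ 2 := by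
    apply summable_of_sum_le (c := ‖x‖ ^ 2)
    · intro i; positivity
    · intro u
      set y : H := ∑ i ∈ u, V i (adjoint (R i) x) with hy
      have hny : ‖y‖ ^ 2 = ∑ i ∈ u, ‖adjoint (R i) x‖ ^ 2 :=
        hortho.norm_sum (fun i => adjoint (R i) x) u
      have hxy : RCLike.re ⟪x, y⟫ = ∑ i ∈ u, ‖adjoint (R i) x‖ ^ 2 := by
        rw [hy, inner_sum]
        rw [map_sum]
        refine Finset.sum_congr rfl fun i _ => ?_
        have : ⟪x, V i (adjoint (R i) x)⟫ = ⟪adjoint (R i) x, adjoint (R i) x⟫ := by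
          rw [hVapp, ← ContinuousLinearMap.adjoint_inner_left]
        rw [this, inner_self_eq_norm_sq]
      have hle : ‖y‖ ^ 2 ≤ ‖x‖ * ‖y‖ := by
        rw [hny, ← hxy]
        exact re_inner_le_norm x y
      have hyx : ‖y‖ ≤ ‖x‖ := by
        rcases eq_or_lt_of_le (norm_nonneg y) with h | h
        · rw [← h]; exact norm_nonneg x
        · nlinarith
      calc ∑ i ∈ u, ‖adjoint (R i) x‖ ^ 2 = ‖y‖ ^ 2 := hny.symm
        _ ≤ ‖x‖ ^ 2 := by nlinarith [norm_nonneg y, norm_nonneg x]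
  -- summability of the projected families
  have hsum : ∀ (P : H →L[ℂ] H), P ∘L P = P → IsSelfAdjoint P →
      Summable fun i => R i (P (adjoint (R i) x)) := by
    intro P hidem hsa
    have h2 : Summable fun i => ‖P (adjoint (R i) x)‖ ^ 2 := by
      refine hbase.of_nonneg_of_le (fun i => by positivity) fun i => ?_
      have := proj_norm_le hidem hsa (adjoint (R i) x)
      nlinarith [norm_nonneg (P (adjoint (R i) x)), norm_nonneg (adjoint (R i) x)]
    have := (hortho.summable_iff_norm_sq_summable fun i => P (adjoint (R i) x)).2 h2
    simpa [hVapp] using this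
  have hsumQ : ∀ n, Summable fun i => R i (Q n (adjoint (R i) x)) :=
    fun n => hsum (Q n) (hQidem n) (hQsa n)
  have hsumL : Summable fun i => R i (Qlim (adjoint (R i) x)) :=
    hsum Qlim hQlimidem hQlimsa
  refine ⟨hsumQ, hsumL, ?_⟩
  -- convergence of the sums
  have hdiffsum : ∀ n, Summable fun i => ‖(Q n - Qlim) (adjoint (R i) x)‖ ^ 2 := by
    intro n
    refine hbase.mul_left 4 |>.of_nonneg_of_le (fun i => by positivity) fun i => ?_
    have h1 := proj_norm_le (hQidem n) (hQsa n) (adjoint (R i) x)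
    have h2 := proj_norm_le hQlimidem hQlimsa (adjoint (R i) x)
    have h3 : ‖(Q n - Qlim) (adjoint (R i) x)‖ ≤ 2 * ‖adjoint (R i) x‖ := by
      rw [ContinuousLinearMap.sub_apply]
      calc ‖Q n (adjoint (R i) x) - Qlim (adjoint (R i) x)‖
          ≤ ‖Q n (adjoint (R i) x)‖ + ‖Qlim (adjoint (R i) x)‖ := norm_sub_le _ _
        _ ≤ 2 * ‖adjoint (R i) x‖ := by linarith
    nlinarith [norm_nonneg ((Q n - Qlim) (adjoint (R i) x))]
  -- norm-squared of the difference of the two tsums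
  have hkey : ∀ n, ‖(∑' i, R i (Q n (adjoint (R i) x))) - ∑' i, R i (Qlim (adjoint (R i) x))‖ ^ 2
      = ∑' i, ‖(Q n - Qlim) (adjoint (R i) x)‖ ^ 2 := by
    intro n
    have hsub : Summable fun i => V i ((Q n - Qlim) (adjoint (R i) x)) :=
      (hortho.summable_iff_norm_sq_summable _).2 (hdiffsum n)
    have heq : (fun i => V i ((Q n - Qlim) (adjoint (R i) x)))
        = fun i => R i (Q n (adjoint (R i) x)) - R i (Qlim (adjoint (R i) x)) := by
      funext i
      rw [hVapp, ContinuousLinearMap.sub_apply, map_sub]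
    have hS : HasSum (fun i => V i ((Q n - Qlim) (adjoint (R i) x)))
        ((∑' i, R i (Q n (adjoint (R i) x))) - ∑' i, R i (Qlim (adjoint (R i) x))) := by
      rw [heq]
      exact (hsumQ n).hasSum.sub hsumL.hasSum
    exact (hasSum_norm_sq_of_orthogonal hortho _ hS).tsum_eq.symm
  -- dominated convergence for the norms squared
  have hdom : Tendsto (fun n => ∑' i, ‖(Q n - Qlim) (adjoint (R i) x)‖ ^ 2) atTop (nhds 0) := by
    have h0 : (0 : ℝ) = ∑' i : ι, (0 : ℝ) := by simp
    rw [h0]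
    apply tendsto_tsum_of_dominated_convergence (bound := fun i => 4 * ‖adjoint (R i) x‖ ^ 2)
      (hbase.mul_left 4)
    · intro i
      have : Tendsto (fun n => (Q n - Qlim) (adjoint (R i) x)) atTop (nhds 0) := by
        have := (hconv (adjoint (R i) x)).sub (tendsto_const_nhds (x := Qlim (adjoint (R i) x)))
        simpa using this
      have := (this.norm.pow 2)
      simpa using this
    · filter_upwards with n i
      have h1 := proj_norm_le (hQidem n) (hQsa n) (adjoint (R i) x)
      have h2 := proj_norm_le hQlimidem hQlimsa (adjoint (R i) x)
      have h3 : ‖(Q n - Qlim) (adjoint (R i) x)‖ ≤ 2 * ‖adjoint (R i) x‖ := by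
        rw [ContinuousLinearMap.sub_apply]
        calc ‖Q n (adjoint (R i) x) - Qlim (adjoint (R i) x)‖
            ≤ ‖Q n (adjoint (R i) x)‖ + ‖Qlim (adjoint (R i) x)‖ := norm_sub_le _ _
          _ ≤ 2 * ‖adjoint (R i) x‖ := by linarith
      rw [Real.norm_of_nonneg (by positivity)]
      nlinarith [norm_nonneg ((Q n - Qlim) (adjoint (R i) x))]
  -- hence the vector sums converge
  have hsums : Tendsto (fun n => ∑' i, R i (Q n (adjoint (R i) x))) atTop
      (nhds (∑' i, R i (Qlim (adjoint (R i) x)))) := by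
    rw [tendsto_iff_norm_sub_tendsto_zero]
    have hsq : Tendsto (fun n => ‖(∑' i, R i (Q n (adjoint (R i) x))) -
        ∑' i, R i (Qlim (adjoint (R i) x))‖ ^ 2) atTop (nhds 0) := by
      simpa [hkey] using hdom
    have := (Real.continuous_sqrt.continuousAt (x := (0:ℝ))).tendsto.comp hsq
    simp only [Function.comp_def, Real.sqrt_zero] at this
    convert this using 2 with n
    rw [Real.sqrt_sq (norm_nonneg _)]
  exact (hconv x).sub hsums
end
end

section
/- Let M be a closed subspace of F²_d invariant under every right creation operator R_i. For a closed R-invariant subspace N, let W(N) := N ∩ (topological closure of the span of ∪_i R_i '' N)ᗮ be its wandering subspace. Fix 0 < r < 1, let Φ_r be the bounded operator on F²_d with Φ_r e_α = r^{|α|} • e_α for all words α, let M_r := the topological closure of Φ_r '' M (again a closed R-invariant subspace), and let P_r be the orthogonal projection of F²_d onto W(M_r). Then W(M_r) equals the topological closure of the image P_r '' (Φ_r '' W(M)). In particular, if W(M) is finite-dimensional, then W(M_r) is finite-dimensional with dim W(M_r) ≤ dim W(M) (the wandering dimension is non-decreasing as r increases to 1). -/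
noncomputable section

open scoped ComplexConjugate
open Matrix
open scoped ComplexOrder

/-- The wandering subspace `W(N) = N ∩ (closure span ∪_i R_i N)ᗮ` of an `R`-invariant
subspace `N`. -/
def wanderingSubspace {d : ℕ} (R : Fin d → (Fock d →L[ℂ] Fock d))
    (N : Submodule ℂ (Fock d)) : Submodule ℂ (Fock d) :=
  N ⊓ ((Submodule.span ℂ (⋃ i, R i '' (N : Set (Fock d)))).topologicalClosure)ᗮ

/-! Since `Φ_r R_i = r • R_i Φ_r`, the rescaling carries `N`, the closed span of `⋃ i, R_i M`,
into the corresponding space `N_r` of `M_r`; a self-adjoint `P_r` with range orthogonal to `N_r`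
annihilates `N_r`. Writing `M = N ⊕ W(M)`, the operator `P_r Φ_r` therefore has the same image
on `M` as on `W(M)`. As `P_r` is a retraction onto the closed set `W(M_r) ⊆ closure (Φ_r M)`,
`W(M_r)` is the closure of that image, which is closed already when `W(M)` is
finite-dimensional. -/

open Submodule

section ClosedShiftSpan

variable {𝕜 E ι : Type*} [RCLike 𝕜] [NormedAddCommGroup E] [InnerProductSpace 𝕜 E]

def closedShiftSpan (R : ι → E →L[𝕜] E) (N : Submodule 𝕜 E) : Submodule 𝕜 E :=
  (span 𝕜 (⋃ i, R i '' (N : Set E))).topologicalClosure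

theorem closedShiftSpan_le {R : ι → E →L[𝕜] E} {N : Submodule 𝕜 E} (hN : IsClosed (N : Set E))
    (hinv : ∀ i, ∀ x ∈ N, R i x ∈ N) : closedShiftSpan R N ≤ N :=
  topologicalClosure_minimal _
    (span_le.2 <| Set.iUnion_subset fun i => Set.image_subset_iff.2 (hinv i)) hN

theorem map_closedShiftSpan_le {R : ι → E →L[𝕜] E} {Φ : E →L[𝕜] E} {c : 𝕜}
    (hΦR : ∀ i, Φ ∘L R i = c • (R i ∘L Φ)) {M M' : Submodule 𝕜 E}
    (hM : M.map (Φ : E →ₗ[𝕜] E) ≤ M') :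
    (closedShiftSpan R M).map (Φ : E →ₗ[𝕜] E) ≤ closedShiftSpan R M' := by
  refine (topologicalClosure_map Φ _).trans (topologicalClosure_mono ?_)
  rw [map_span, span_le, Set.image_iUnion]
  refine Set.iUnion_subset fun i => ?_
  rintro _ ⟨_, ⟨x, hx, rfl⟩, rfl⟩
  have hx' : R i (Φ x) ∈ span 𝕜 (⋃ i, R i '' (M' : Set E)) :=
    subset_span (Set.mem_iUnion_of_mem i ⟨Φ x, hM ⟨x, hx, rfl⟩, rfl⟩)
  simpa [← ContinuousLinearMap.comp_apply, hΦR i] using smul_mem _ c hx'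

theorem map_eq_map_inf_orthogonal_closedShiftSpan [CompleteSpace E] {R : ι → E →L[𝕜] E}
    {M : Submodule 𝕜 E} (hM : IsClosed (M : Set E)) (hinv : ∀ i, ∀ x ∈ M, R i x ∈ M)
    {F : Type*} [AddCommGroup F] [Module 𝕜 F] (f : E →ₗ[𝕜] F)
    (hf : closedShiftSpan R M ≤ LinearMap.ker f) :
    M.map f = (M ⊓ (closedShiftSpan R M)ᗮ).map f := by
  have : CompleteSpace (closedShiftSpan R M) :=
    (isClosed_topologicalClosure _).completeSpace_coe
  conv_lhs => rw [← sup_orthogonal_inf_of_hasOrthogonalProjection (closedShiftSpan_le hM hinv)]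
  rw [Submodule.map_sup, LinearMap.le_ker_iff_map.1 hf, bot_sup_eq, inf_comm]

end ClosedShiftSpan

theorem IsSelfAdjoint.apply_eq_zero_of_forall_mem_orthogonal {𝕜 E : Type*} [RCLike 𝕜]
    [NormedAddCommGroup E] [InnerProductSpace 𝕜 E] [CompleteSpace E] {P : E →L[𝕜] E}
    (hP : IsSelfAdjoint P) {K : Submodule 𝕜 E} (hPK : ∀ x, P x ∈ Kᗮ) {y : E} (hy : y ∈ K) :
    P y = 0 :=
  ext_inner_right 𝕜 fun z => by
    rw [show inner 𝕜 (P y) z = inner 𝕜 y (P z) from hP.isSymmetric y z,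
      inner_right_of_mem_orthogonal hy (hPK z), inner_zero_left]

theorem eq_closure_image_of_retraction {X : Type*} [TopologicalSpace X] {P : X → X}
    (hP : Continuous P) {W S : Set X} (hW : IsClosed W) (hPW : ∀ x, P x ∈ W)
    (hfix : ∀ x ∈ W, P x = x) (hWS : W ⊆ closure S) : W = closure (P '' S) := by
  refine subset_antisymm (fun x hx => ?_)
    (closure_minimal (Set.image_subset_iff.2 fun x _ => hPW x) hW)
  exact hfix x hx ▸ image_closure_subset_closure_image hP ⟨x, hWS hx, rfl⟩

theorem rescale_comp_creation {d : ℕ} {R : Fin d → (Fock d →L[ℂ] Fock d)}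
    (hR : ∀ (i : Fin d) (α : Word d), R i (fockBasis d α) = fockBasis d (α * FreeMonoid.of i))
    {r : ℝ} {Φ : Fock d →L[ℂ] Fock d}
    (hΦ : ∀ α : Word d,
      Φ (fockBasis d α) = ((r : ℂ) ^ (FreeMonoid.toList α).length) • fockBasis d α)
    (i : Fin d) : Φ ∘L R i = (r : ℂ) • (R i ∘L Φ) := by
  refine lp.ext_continuousLinearMap (by norm_num) fun α => ContinuousLinearMap.ext_ring ?_
  simp only [ContinuousLinearMap.comp_apply, _root_.smul_apply,
    lp.singleContinuousLinearMap_apply]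
  rw [hR, hΦ, hΦ, map_smul, hR, smul_smul, FreeMonoid.toList_mul, List.length_append,
    FreeMonoid.toList_of, List.length_singleton, pow_succ', mul_comm]

theorem wandering_dimension_monotone_general {d : ℕ}
    (R : Fin d → (Fock d →L[ℂ] Fock d))
    (hR : ∀ (i : Fin d) (α : Word d), R i (fockBasis d α) = fockBasis d (α * FreeMonoid.of i))
    (M : Submodule ℂ (Fock d)) (hMc : IsClosed (M : Set (Fock d)))
    (hMinv : ∀ (i : Fin d), ∀ x ∈ M, R i x ∈ M)
    (r : ℝ)
    (Φ : Fock d →L[ℂ] Fock d)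
    (hΦ : ∀ α : Word d,
      Φ (fockBasis d α) = ((r : ℂ) ^ (FreeMonoid.toList α).length) • fockBasis d α)
    (Mr : Submodule ℂ (Fock d)) (hMr : Mr = (Submodule.map (Φ : Fock d →ₗ[ℂ] Fock d) M).topologicalClosure)
    (P : Fock d →L[ℂ] Fock d)
    (hP1 : ∀ x : Fock d, P x ∈ wanderingSubspace R Mr)
    (hP2 : ∀ x ∈ wanderingSubspace R Mr, P x = x)
    (hP3 : IsSelfAdjoint P) :
    ((wanderingSubspace R Mr : Set (Fock d))
        = closure (P '' (Φ '' (wanderingSubspace R M : Set (Fock d))))) ∧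
      (FiniteDimensional ℂ (wanderingSubspace R M) →
        FiniteDimensional ℂ (wanderingSubspace R Mr) ∧
        Module.finrank ℂ (wanderingSubspace R Mr)
          ≤ Module.finrank ℂ (wanderingSubspace R M)) := by
  set f : Fock d →ₗ[ℂ] Fock d := (P : Fock d →ₗ[ℂ] Fock d) ∘ₗ (Φ : Fock d →ₗ[ℂ] Fock d)
  have hΦM : M.map (Φ : Fock d →ₗ[ℂ] Fock d) ≤ Mr := hMr ▸ le_topologicalClosure _
  have hP_shift : closedShiftSpan R Mr ≤ LinearMap.ker (P : Fock d →ₗ[ℂ] Fock d) := fun y hy =>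
    LinearMap.mem_ker.2 (hP3.apply_eq_zero_of_forall_mem_orthogonal (fun x => (hP1 x).2) hy)
  have hf_shift : closedShiftSpan R M ≤ LinearMap.ker f := by
    rw [LinearMap.ker_comp, ← map_le_iff_le_comap]
    exact (map_closedShiftSpan_le (rescale_comp_creation hR hΦ) hΦM).trans hP_shift
  have hmap : M.map f = (wanderingSubspace R M).map f :=
    map_eq_map_inf_orthogonal_closedShiftSpan hMc hMinv f hf_shift
  have hWMr_closed : IsClosed (wanderingSubspace R Mr : Set (Fock d)) :=
    (hMr ▸ isClosed_topologicalClosure _ : IsClosed (Mr : Set (Fock d))).inter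
      (isClosed_orthogonal _)
  have himage : P '' (Φ '' M) = P '' (Φ '' wanderingSubspace R M) := by
    simpa only [f, map_coe, LinearMap.coe_comp, ContinuousLinearMap.coe_coe, Set.image_comp]
      using congrArg SetLike.coe hmap
  have hset : (wanderingSubspace R Mr : Set (Fock d))
      = closure (P '' (Φ '' (wanderingSubspace R M : Set (Fock d)))) := by
    refine himage ▸ eq_closure_image_of_retraction P.continuous hWMr_closed hP1 hP2 fun x hx => ?_
    have hxMr : x ∈ Mr := hx.1
    rwa [hMr, ← SetLike.mem_coe, topologicalClosure_coe, map_coe] at hxMr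
  refine ⟨hset, fun _ => ?_⟩
  have hWMr_eq : wanderingSubspace R Mr = (wanderingSubspace R M).map f := by
    refine SetLike.coe_injective (hset.trans ?_)
    rw [← (closed_of_finiteDimensional ((wanderingSubspace R M).map f)).closure_eq]
    simp only [f, map_coe, LinearMap.coe_comp, ContinuousLinearMap.coe_coe, Set.image_comp]
  exact hWMr_eq ▸ ⟨inferInstance, finrank_map_le _ _⟩

/-- **Monotonicity of the wandering dimension under rescaling** (Lemma `monrank`).
If `M` is a closed `R`-invariant subspace, `M_r` the closure of `Φ_r M`, and `P_r` the
orthogonal projection onto `W(M_r)`, then `W(M_r)` is the closed span of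
`P_r Φ_r W(M)`; in particular `dim W(M_r) ≤ dim W(M)`. -/
theorem wandering_dimension_monotone {d : ℕ}
    (R : Fin d → (Fock d →L[ℂ] Fock d))
    (hR : ∀ (i : Fin d) (α : Word d), R i (fockBasis d α) = fockBasis d (α * FreeMonoid.of i))
    (M : Submodule ℂ (Fock d)) (hMc : IsClosed (M : Set (Fock d)))
    (hMinv : ∀ (i : Fin d), ∀ x ∈ M, R i x ∈ M)
    (r : ℝ) (hr0 : 0 < r) (hr1 : r < 1)
    (Φ : Fock d →L[ℂ] Fock d)
    (hΦ : ∀ α : Word d,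
      Φ (fockBasis d α) = ((r : ℂ) ^ (FreeMonoid.toList α).length) • fockBasis d α)
    (Mr : Submodule ℂ (Fock d)) (hMr : Mr = (Submodule.map (Φ : Fock d →ₗ[ℂ] Fock d) M).topologicalClosure)
    (P : Fock d →L[ℂ] Fock d)
    (hP1 : ∀ x : Fock d, P x ∈ wanderingSubspace R Mr)
    (hP2 : ∀ x ∈ wanderingSubspace R Mr, P x = x)
    (hP3 : IsSelfAdjoint P) :
    ((wanderingSubspace R Mr : Set (Fock d))
        = closure (P '' (Φ '' (wanderingSubspace R M : Set (Fock d))))) ∧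
      (FiniteDimensional ℂ (wanderingSubspace R M) →
        FiniteDimensional ℂ (wanderingSubspace R Mr) ∧
        Module.finrank ℂ (wanderingSubspace R Mr)
          ≤ Module.finrank ℂ (wanderingSubspace R M)) :=
  wandering_dimension_monotone_general R hR M hMc hMinv r Φ hΦ Mr hMr P hP1 hP2 hP3
end
end

section
/- Let H' be a complex Hilbert space and S : Fin d → (H' →L[ℂ] H') a family with S_i* ∘ S_j equal to the identity if i = j and to 0 if i ≠ j (isometries with pairwise orthogonal ranges). Let A : F²_d →L[ℂ] H' satisfy A ∘ R_i = S_i ∘ A for every i. If the kernel of A is nontrivial (there exists h ≠ 0 with A h = 0), then there exists h ∈ F²_d with A h = 0 and h(ε) ≠ 0 (nonzero vacuum coefficient). -/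
noncomputable section

open scoped ComplexConjugate
open Matrix
open scoped ComplexOrder

section aux

variable {d : ℕ}

local notation "⟪" x ", " y "⟫" => @inner ℂ _ _ x y

private lemma fock_apply_eq_inner (f : Fock d) (γ : Word d) :
    (f γ : ℂ) = ⟪fockBasis d γ, f⟫ := by
  rw [lp.inner_single_left]
  simp [RCLike.inner_apply]

private lemma fock_ext_clm {H' : Type*} [NormedAddCommGroup H'] [NormedSpace ℂ H']
    (T U : Fock d →L[ℂ] H') (h : ∀ α, T (fockBasis d α) = U (fockBasis d α)) : T = U := by
  ext f
  have hs : HasSum (fun α => lp.single 2 α (f α)) f :=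
    lp.hasSum_single (by norm_num) f
  have hsingle : ∀ α : Word d, lp.single 2 α (f α) = f α • fockBasis d α := by
    intro α
    rw [← lp.single_smul]
    norm_num
  have h1 : HasSum (fun α => T (lp.single 2 α (f α))) (T f) := hs.mapL T
  have h2 : HasSum (fun α => T (lp.single 2 α (f α))) (U f) := by
    have h2' : HasSum (fun α => U (lp.single 2 α (f α))) (U f) := hs.mapL U
    refine h2'.congr_fun fun α => ?_
    rw [hsingle, T.map_smul, U.map_smul, h]
  exact h1.unique h2

private lemma adjR_apply (R : Fin d → (Fock d →L[ℂ] Fock d))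
    (hR : ∀ (i : Fin d) (α : Word d), R i (fockBasis d α) = fockBasis d (α * FreeMonoid.of i))
    (i : Fin d) (h : Fock d) (β : Word d) :
    (ContinuousLinearMap.adjoint (R i) h) β = h (β * FreeMonoid.of i) := by
  rw [fock_apply_eq_inner, ContinuousLinearMap.adjoint_inner_right, hR,
    ← fock_apply_eq_inner]

private lemma word_concat_ne_one (β : Word d) (i : Fin d) : β * FreeMonoid.of i ≠ 1 := by
  intro hcon
  have := congrArg FreeMonoid.toList hcon
  simp [FreeMonoid.toList_mul] at this

private lemma adjR_one (R : Fin d → (Fock d →L[ℂ] Fock d))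
    (hR : ∀ (i : Fin d) (α : Word d), R i (fockBasis d α) = fockBasis d (α * FreeMonoid.of i))
    (i : Fin d) : ContinuousLinearMap.adjoint (R i) (fockBasis d 1) = 0 := by
  refine lp.ext (funext fun β => ?_)
  rw [adjR_apply R hR]
  have : (0 : Fock d) β = 0 := rfl
  rw [this]
  exact lp.single_apply_ne _ _ _ (word_concat_ne_one β i)

private lemma word_concat_inj {β γ : Word d} {i j : Fin d}
    (hcon : γ * FreeMonoid.of i = β * FreeMonoid.of j) : γ = β ∧ i = j := by
  have hl := congrArg FreeMonoid.toList hcon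
  simp only [FreeMonoid.toList_mul, FreeMonoid.toList_of] at hl
  have hlen : (FreeMonoid.toList γ).length = (FreeMonoid.toList β).length := by
    have := congrArg List.length hl
    simp at this
    omega
  obtain ⟨h1, h2⟩ := List.append_inj hl hlen
  exact ⟨FreeMonoid.toList.injective h1, by simpa using h2⟩

private lemma adjR_concat (R : Fin d → (Fock d →L[ℂ] Fock d))
    (hR : ∀ (i : Fin d) (α : Word d), R i (fockBasis d α) = fockBasis d (α * FreeMonoid.of i))
    (i j : Fin d) (β : Word d) :
    ContinuousLinearMap.adjoint (R i) (fockBasis d (β * FreeMonoid.of j)) =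
      if i = j then fockBasis d β else 0 := by
  refine lp.ext (funext fun γ => ?_)
  rw [adjR_apply R hR]
  by_cases hij : i = j
  · subst hij
    rw [if_pos rfl]
    by_cases hγ : γ = β
    · subst hγ
      rw [lp.single_apply_self, lp.single_apply_self]
    · rw [lp.single_apply_ne _ _ _ (fun hcon => hγ (word_concat_inj hcon).1),
        lp.single_apply_ne _ _ _ hγ]
  · simp only [if_neg hij]
    have : (0 : Fock d) γ = 0 := rfl
    rw [this]
    exact lp.single_apply_ne _ _ _ (fun hcon => hij (word_concat_inj hcon).2)

private lemma keyA {H' : Type*} [NormedAddCommGroup H'] [InnerProductSpace ℂ H']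
    [CompleteSpace H']
    (R : Fin d → (Fock d →L[ℂ] Fock d))
    (hR : ∀ (i : Fin d) (α : Word d), R i (fockBasis d α) = fockBasis d (α * FreeMonoid.of i))
    (S : Fin d → (H' →L[ℂ] H'))
    (hS : ∀ i j, ContinuousLinearMap.adjoint (S i) ∘L S j = if i = j then 1 else 0)
    (A : Fock d →L[ℂ] H') (hA : ∀ i, A ∘L R i = S i ∘L A) (i : Fin d) :
    A ∘L ContinuousLinearMap.adjoint (R i)
      = ContinuousLinearMap.adjoint (S i) ∘L A
        - (innerSL ℂ (fockBasis d 1)).smulRight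
            (ContinuousLinearMap.adjoint (S i) (A (fockBasis d 1))) := by
  apply fock_ext_clm
  intro α
  rcases List.eq_nil_or_concat (FreeMonoid.toList α) with hnil | ⟨L, b, hL⟩
  · have hα : α = 1 := FreeMonoid.toList.injective (by rw [hnil]; rfl)
    subst hα
    simp only [ContinuousLinearMap.comp_apply, ContinuousLinearMap.sub_apply,
      ContinuousLinearMap.smulRight_apply, innerSL_apply_apply]
    rw [adjR_one R hR i, map_zero]
    have h11 : ⟪fockBasis d 1, fockBasis d 1⟫ = 1 := by
      rw [← fock_apply_eq_inner]
      exact lp.single_apply_self _ _ _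
    rw [h11, one_smul, sub_self]
  · have hα : α = FreeMonoid.ofList L * FreeMonoid.of b :=
      FreeMonoid.toList.injective (by simp [FreeMonoid.toList_mul, hL])
    subst hα
    set β := FreeMonoid.ofList L with hβ
    simp only [ContinuousLinearMap.comp_apply, ContinuousLinearMap.sub_apply,
      ContinuousLinearMap.smulRight_apply, innerSL_apply_apply]
    rw [adjR_concat R hR]
    have hinner : ⟪fockBasis d 1, fockBasis d (β * FreeMonoid.of b)⟫ = 0 := by
      rw [← fock_apply_eq_inner]
      exact lp.single_apply_ne _ _ _ (word_concat_ne_one β b).symm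
    rw [hinner, zero_smul, sub_zero]
    have hAe : A (fockBasis d (β * FreeMonoid.of b)) = S b (A (fockBasis d β)) := by
      rw [← hR b β]
      exact DFunLike.congr_fun (hA b) (fockBasis d β)
    rw [hAe]
    have hSS : ContinuousLinearMap.adjoint (S i) (S b (A (fockBasis d β)))
        = (if i = b then (1 : H' →L[ℂ] H') else 0) (A (fockBasis d β)) := by
      rw [← ContinuousLinearMap.comp_apply, hS i b]
    rw [hSS]
    by_cases hib : i = b
    · simp [hib]
    · simp [hib]

end aux

/-- **A nontrivial kernel of an intertwiner contains a vector with nonzero vacuum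
coefficient.** -/
theorem kernel_contains_nonzero_vacuum {d : ℕ} (hd : 1 ≤ d)
    (R : Fin d → (Fock d →L[ℂ] Fock d))
    (hR : ∀ (i : Fin d) (α : Word d), R i (fockBasis d α) = fockBasis d (α * FreeMonoid.of i))
    {H' : Type*} [NormedAddCommGroup H'] [InnerProductSpace ℂ H'] [CompleteSpace H']
    (S : Fin d → (H' →L[ℂ] H'))
    (hS : ∀ i j, ContinuousLinearMap.adjoint (S i) ∘L S j = if i = j then 1 else 0)
    (A : Fock d →L[ℂ] H') (hA : ∀ i, A ∘L R i = S i ∘L A)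
    (hker : ∃ h : Fock d, h ≠ 0 ∧ A h = 0) :
    ∃ h : Fock d, A h = 0 ∧ h (1 : Word d) ≠ 0 := by
  obtain ⟨h0, hne, hA0⟩ := hker
  have hex : ∃ α : Word d, h0 α ≠ 0 := by
    by_contra hall
    push_neg at hall
    exact hne (lp.ext (funext fun α => hall α))
  obtain ⟨α0, hα0⟩ := hex
  have main : ∀ n : ℕ, ∀ α : Word d, (FreeMonoid.toList α).length = n →
      ∀ h : Fock d, A h = 0 → h α ≠ 0 →
      ∃ h' : Fock d, A h' = 0 ∧ h' (1 : Word d) ≠ 0 := by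
    intro n
    induction n with
    | zero =>
      intro α hlen h hA0 hα
      have : α = 1 := FreeMonoid.toList.injective (by
        rw [List.length_eq_zero_iff] at hlen
        rw [hlen]; rfl)
      exact ⟨h, hA0, this ▸ hα⟩
    | succ n ih =>
      intro α hlen h hAh hα
      by_cases h1 : h (1 : Word d) = 0
      · rcases List.eq_nil_or_concat (FreeMonoid.toList α) with hnil | ⟨L, b, hL⟩
        · rw [hnil] at hlen; simp at hlen
        · have hαeq : α = FreeMonoid.ofList L * FreeMonoid.of b :=
            FreeMonoid.toList.injective (by simp [FreeMonoid.toList_mul, hL])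
          set β := FreeMonoid.ofList L with hβ
          set g := ContinuousLinearMap.adjoint (R b) h with hg
          have hAg : A g = 0 := by
            have := DFunLike.congr_fun (keyA R hR S hS A hA b) h
            simp only [ContinuousLinearMap.comp_apply, ContinuousLinearMap.sub_apply,
              ContinuousLinearMap.smulRight_apply, innerSL_apply_apply] at this
            rw [← hg] at this
            rw [this, hAh, map_zero, ← fock_apply_eq_inner, h1]
            simp
          have hgβ : g β = h α := by
            rw [hg, adjR_apply R hR, ← hαeq]
          have hlenβ : (FreeMonoid.toList β).length = n := by
            have : (FreeMonoid.toList α).length = L.length + 1 := by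
              rw [hL]; simp
            have hLlen : L.length = n := by omega
            simpa [hβ] using hLlen
          exact ih β hlenβ g hAg (by rw [hgβ]; exact hα)
      · exact ⟨h, hAh, h1⟩
  exact main (FreeMonoid.toList α0).length α0 rfl h0 hA0 hα0
end
end

section
/- Let 0 ≤ r < 1 and let Z = (Z_1,…,Z_d) be a d-tuple of n×n complex matrices with Z_1Z_1ᴴ + ⋯ + Z_dZ_dᴴ ≤ r²·1 in the Loewner order. Then for all y, v ∈ ℂⁿ with ‖y‖ ≤ 1 and ‖v‖ ≤ 1, the family α ↦ ‖⟪Z^α v, y⟫‖² (indexed by the free monoid 𝔽^d) is summable and ∑'_α ‖⟪Z^α v, y⟫‖² ≤ 1/(1 − r²). (This is the uniform norm bound ‖K{Z, y, v}‖² ≤ 1/(1 − r²) for NC Szegő kernel vectors at points of row norm at most r.) -/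
noncomputable section

open scoped ComplexConjugate
open Matrix
open scoped ComplexOrder

/-!
Since `⟪Z^α v, y⟫ = ⟪v, (Z^α)ᴴ y⟫`, Cauchy–Schwarz bounds each term by `‖(Z^α)ᴴ y‖²`.
The hypothesis on `Z` says `∑ᵢ ‖(Z i)ᴴ w‖² ≤ r² ‖w‖²` for every `w`; peeling off the first letter
of a word shows by induction that the words of length `k` contribute at most `r^(2k) ‖y‖²`, and
summing the geometric series over the lengths gives `1 / (1 - r²)`.
-/

open WithLp

theorem FreeMonoid.summable_and_tsum_le_of_sum_ofFn_le {α : Type*} [Fintype α]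
    {f : FreeMonoid α → ℝ} (hf : 0 ≤ f) {c : ℕ → ℝ} (hc : Summable c)
    (hlevel : ∀ k, ∑ t : Fin k → α, f (ofList (List.ofFn t)) ≤ c k) :
    Summable f ∧ ∑' w, f w ≤ ∑' k, c k := by
  let e : (Σ k, Fin k → α) ≃ FreeMonoid α := List.equivSigmaTuple.symm.trans ofList
  have hfiber : ∀ k, Summable fun t : Fin k → α => f (e ⟨k, t⟩) := fun _ => .of_finite
  have hlevel' : ∀ k, ∑' t : Fin k → α, f (e ⟨k, t⟩) ≤ c k := fun k => by
    rw [tsum_fintype]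
    exact hlevel k
  have hsum_level : Summable fun k => ∑' t : Fin k → α, f (e ⟨k, t⟩) :=
    hc.of_nonneg_of_le (fun _ => tsum_nonneg fun _ => hf _) hlevel'
  have hsum : Summable (f ∘ e) :=
    (summable_sigma_of_nonneg fun _ => hf _).2 ⟨hfiber, hsum_level⟩
  refine ⟨e.summable_iff.1 hsum, ?_⟩
  rw [← e.tsum_eq]
  exact (hsum.tsum_sigma' hfiber).trans_le (hsum_level.tsum_le_tsum hlevel' hc)

namespace Matrix

variable {ι : Type*} [Fintype ι]

theorem dotProduct_star_self_eq_norm_sq (u : ι → ℂ) :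
    star u ⬝ᵥ u = ((‖toLp 2 u‖ ^ 2 : ℝ) : ℂ) := by
  have h := inner_self_eq_norm_sq_to_K (𝕜 := ℂ) (toLp 2 u)
  rw [EuclideanSpace.inner_toLp_toLp, dotProduct_comm] at h
  exact_mod_cast h

theorem norm_star_mulVec_dotProduct_le (A : Matrix ι ι ℂ) (v y : ι → ℂ) :
    ‖star (A *ᵥ v) ⬝ᵥ y‖ ≤ ‖toLp 2 v‖ * ‖toLp 2 (Aᴴ *ᵥ y)‖ := by
  have h : star (A *ᵥ v) ⬝ᵥ y = inner ℂ (toLp 2 v) (toLp 2 (Aᴴ *ᵥ y)) := by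
    rw [EuclideanSpace.inner_toLp_toLp, star_mulVec, ← dotProduct_mulVec, dotProduct_comm]
  rw [h]
  exact norm_inner_le_norm _ _

variable [DecidableEq ι] {κ : Type*} [Fintype κ] {r : ℝ} (Z : κ → Matrix ι ι ℂ)
  (hZ : ((r ^ 2 : ℂ) • (1 : Matrix ι ι ℂ) - ∑ i, Z i * (Z i)ᴴ).PosSemidef)
include hZ

theorem sum_norm_conjTranspose_mulVec_sq_le (w : ι → ℂ) :
    ∑ i, ‖toLp 2 ((Z i)ᴴ *ᵥ w)‖ ^ 2 ≤ r ^ 2 * ‖toLp 2 w‖ ^ 2 := by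
  have hgram : ∀ i, star w ⬝ᵥ (Z i * (Z i)ᴴ) *ᵥ w = star ((Z i)ᴴ *ᵥ w) ⬝ᵥ (Z i)ᴴ *ᵥ w :=
    fun i => by rw [← mulVec_mulVec, dotProduct_mulVec, star_mulVec, conjTranspose_conjTranspose]
  have h := (posSemidef_iff_dotProduct_mulVec.1 hZ).2 w
  simp only [sub_mulVec, smul_mulVec, one_mulVec, dotProduct_sub, dotProduct_smul, sum_mulVec,
    dotProduct_sum, hgram, dotProduct_star_self_eq_norm_sq] at h
  rw [smul_eq_mul, ← Complex.ofReal_pow, ← Complex.ofReal_mul, ← Complex.ofReal_sum,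
    ← Complex.ofReal_sub, Complex.zero_le_real] at h
  linarith

theorem sum_norm_conjTranspose_listProd_mulVec_sq_le (k : ℕ) (w : ι → ℂ) :
    ∑ t : Fin k → κ, ‖toLp 2 (((List.ofFn t).map Z).prodᴴ *ᵥ w)‖ ^ 2 ≤
      (r ^ 2) ^ k * ‖toLp 2 w‖ ^ 2 := by
  induction k generalizing w with
  | zero => simp
  | succ k ih =>
    rw [← (Fin.consEquiv fun _ => κ).sum_comp, Fintype.sum_prod_type]
    calc ∑ i, ∑ t : Fin k → κ,
          ‖toLp 2 (((List.ofFn (Fin.cons i t : Fin (k + 1) → κ)).map Z).prodᴴ *ᵥ w)‖ ^ 2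
        = ∑ i, ∑ t : Fin k → κ,
          ‖toLp 2 (((List.ofFn t).map Z).prodᴴ *ᵥ ((Z i)ᴴ *ᵥ w))‖ ^ 2 := by
          simp only [List.ofFn_cons, List.map_cons, List.prod_cons, conjTranspose_mul,
            mulVec_mulVec]
      _ ≤ ∑ i, (r ^ 2) ^ k * ‖toLp 2 ((Z i)ᴴ *ᵥ w)‖ ^ 2 := Finset.sum_le_sum fun i _ => ih _
      _ ≤ (r ^ 2) ^ (k + 1) * ‖toLp 2 w‖ ^ 2 := by
          rw [← Finset.mul_sum, pow_succ (r ^ 2) k, mul_assoc]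
          exact mul_le_mul_of_nonneg_left (sum_norm_conjTranspose_mulVec_sq_le Z hZ w)
            (by positivity)

end Matrix

/-- **Uniform bound on NC Szegő kernel vectors.**
If `Z` is a row contraction of row norm at most `r < 1` and `‖y‖, ‖v‖ ≤ 1`, then the
coefficient sequence of the NC Szegő kernel `K{Z,y,v}` is square-summable with
`∑'_α |⟪Z^α v, y⟫|² ≤ 1/(1 - r²)`. -/
theorem szego_kernel_norm_bound {d n : ℕ} (r : ℝ) (hr0 : 0 ≤ r) (hr1 : r < 1)
    (Z : Fin d → Matrix (Fin n) (Fin n) ℂ)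
    (hZ : ((r ^ 2 : ℂ) • (1 : Matrix (Fin n) (Fin n) ℂ) - ∑ i, Z i * (Z i)ᴴ).PosSemidef)
    (y v : EuclideanSpace ℂ (Fin n)) (hy : ‖y‖ ≤ 1) (hv : ‖v‖ ≤ 1) :
    (Summable fun α : Word d =>
      ‖dotProduct (star (wordProdM Z α *ᵥ fun j => v j)) (fun j => y j)‖ ^ 2) ∧
    ∑' α : Word d,
        ‖dotProduct (star (wordProdM Z α *ᵥ fun j => v j)) (fun j => y j)‖ ^ 2
      ≤ 1 / (1 - r ^ 2) := by
  have hterm (A : Matrix (Fin n) (Fin n) ℂ) :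
      ‖star (A *ᵥ ofLp v) ⬝ᵥ ofLp y‖ ^ 2 ≤ ‖toLp 2 (Aᴴ *ᵥ ofLp y)‖ ^ 2 :=
    pow_le_pow_left₀ (norm_nonneg _) ((norm_star_mulVec_dotProduct_le A _ _).trans
      (mul_le_of_le_one_left (norm_nonneg _) hv)) 2
  have hlevel (k : ℕ) : ∑ t : Fin k → Fin d,
      ‖star (wordProdM Z (.ofList (List.ofFn t)) *ᵥ ofLp v) ⬝ᵥ ofLp y‖ ^ 2 ≤ (r ^ 2) ^ k :=
    calc _ ≤ ∑ t : Fin k → Fin d, ‖toLp 2 (((List.ofFn t).map Z).prodᴴ *ᵥ ofLp y)‖ ^ 2 :=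
          Finset.sum_le_sum fun t _ => hterm _
      _ ≤ (r ^ 2) ^ k * ‖y‖ ^ 2 := sum_norm_conjTranspose_listProd_mulVec_sq_le Z hZ k (ofLp y)
      _ ≤ (r ^ 2) ^ k := mul_le_of_le_one_right (by positivity) (pow_le_one₀ (norm_nonneg y) hy)
  have hr2 : r ^ 2 < 1 := pow_lt_one₀ hr0 hr1 two_ne_zero
  rw [one_div, ← tsum_geometric_of_lt_one (sq_nonneg r) hr2]
  exact FreeMonoid.summable_and_tsum_le_of_sum_ofFn_le (fun _ => sq_nonneg _)
    (summable_geometric_of_lt_one (sq_nonneg r) hr2) hlevel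
end
end
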